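/- arXiv:2104.03264 — 6 statements merged into one kernel-verified Lean document; each statement's English description precedes it below -/
import Mathlib

section
/- A permutation w in S_n has the property that no simple generator s_i appears more than once in some (equivalently, any) reduced word for w if and only if w avoids the patterns 321 and 3412. -/
open Equiv

/-- one-line notation (1-based values) of a permutation of `Fin n` -/
def oneLine {n : ℕ} (w : Perm (Fin n)) : List ℕ := List.ofFn fun i => (w i).val + 1

/-- `w` contains the pattern given by the list `p` (distinct positive integers
in one-line notation): some subsequence of `w` has the same relative order. -/
def ContainsPat {n : ℕ} (w : Perm (Fin n)) (p : List ℕ) : Prop :=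
  ∃ f : Fin p.length → Fin n, StrictMono f ∧
    ∀ i j : Fin p.length, p.get i < p.get j ↔ w (f i) < w (f j)

/-- Coxeter length of a permutation = number of inversions -/
def len {n : ℕ} (w : Perm (Fin n)) : ℕ :=
  (Finset.univ.filter fun q : Fin n × Fin n => q.1 < q.2 ∧ w q.2 < w q.1).card

/-- the simple generators `s_i = (i, i+1)` that are left descents of `w` -/
def descentGens {n : ℕ} (w : Perm (Fin n)) : Set (Perm (Fin n)) :=
  {u | ∃ i j : Fin n, (i : ℕ) + 1 = (j : ℕ) ∧ u = Equiv.swap i j ∧ w⁻¹ j < w⁻¹ i}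

/-- `v` is the longest element `w₀(J(w))` of the parabolic subgroup generated by
the left descents of `w` -/
def IsW0J {n : ℕ} (w v : Perm (Fin n)) : Prop :=
  v ∈ Subgroup.closure (descentGens w) ∧
    ∀ u ∈ Subgroup.closure (descentGens w), len u ≤ len v

/-- `v[1,i]`: the set of values in the first `i` positions (`i` is 1-based) -/
def prefSet {n : ℕ} (v : Perm (Fin n)) (i : ℕ) : Finset (Fin n) :=
  (Finset.univ.filter fun j : Fin n => (j : ℕ) < i).image v

/-- `(v,w)` is divisible after position `i` : `|v[1,i] ∩ w[1,i]| ≤ i - 2` -/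
def DivisibleAfter {n : ℕ} (v w : Perm (Fin n)) (i : ℕ) : Prop :=
  (prefSet v i ∩ prefSet w i).card + 2 ≤ i

/-- `(v,w)` is divisible at position `i` : `v(i) = w(i)` and `|v[1,i] ∩ w[1,i]| ≤ i - 1` -/
def DivisibleAt {n : ℕ} (v w : Perm (Fin n)) (i : ℕ) : Prop :=
  ∃ h : i - 1 < n, v ⟨i - 1, h⟩ = w ⟨i - 1, h⟩ ∧ (prefSet v i ∩ prefSet w i).card + 1 ≤ i

/-- `(v,w)` is divisible at or after some position `1 ≤ i ≤ n` -/
def Divisible {n : ℕ} (v w : Perm (Fin n)) : Prop :=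
  ∃ i : ℕ, 1 ≤ i ∧ i ≤ n ∧ (DivisibleAfter v w i ∨ DivisibleAt v w i)

def pat321 : List ℕ := [3, 2, 1]
def pat3412 : List ℕ := [3, 4, 1, 2]

def P321L : List (List ℕ) :=
  [[2,4,5,3,1],[2,5,3,1,4],[2,5,3,4,1],[4,2,5,3,1],[4,5,2,3,1],[4,5,3,1,2],
   [5,2,3,1,4],[5,2,3,4,1],[5,3,1,2,4],[5,3,1,4,2],[5,3,4,1,2]]

def P3412L : List (List ℕ) :=
  [[3,4,5,1,2],[3,4,5,2,1],[3,5,4,1,2],[3,5,4,2,1],[4,5,1,2,3],[4,5,2,1,3],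
   [4,5,2,3,1],[5,3,4,1,2],[5,3,4,2,1],[5,4,1,2,3],[5,4,2,1,3],[5,4,2,3,1]]

def PL : List (List ℕ) :=
  [[2,4,5,3,1],[2,5,3,1,4],[2,5,3,4,1],[3,4,5,1,2],[3,4,5,2,1],[3,5,4,1,2],[3,5,4,2,1],
   [4,2,5,3,1],[4,5,1,2,3],[4,5,2,1,3],[4,5,2,3,1],[4,5,3,1,2],[5,2,3,1,4],[5,2,3,4,1],
   [5,3,1,2,4],[5,3,1,4,2],[5,3,4,1,2],[5,3,4,2,1],[5,4,1,2,3],[5,4,2,1,3],[5,4,2,3,1]]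

/-- Bruhat order: generated by covers `a ⋖ a·t` with `t` a transposition and
`ℓ(a·t) = ℓ(a) + 1` -/
def BruhatLE {n : ℕ} (v w : Perm (Fin n)) : Prop :=
  Relation.ReflTransGen
    (fun a b => (∃ x y : Fin n, x ≠ y ∧ b = a * Equiv.swap x y) ∧ len b = len a + 1) v w

/-- product of a word in the simple generators `s_i = (i, i+1)` -/
def wordProd {n : ℕ} (l : List {i : ℕ // i + 1 < n}) : Perm (Fin n) :=
  (l.map fun i => Equiv.swap (⟨i.1, Nat.lt_of_succ_lt i.2⟩ : Fin n) ⟨i.1 + 1, i.2⟩).prod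

/-- `l` is a reduced word for `w`: a minimal-length expression of `w` as a
product of simple generators -/
def IsReducedWord {n : ℕ} (w : Perm (Fin n)) (l : List {i : ℕ // i + 1 < n}) : Prop :=
  wordProd l = w ∧
    ∀ l' : List {i : ℕ // i + 1 < n}, wordProd l' = w → l.length ≤ l'.length

namespace BoolPerm

variable {n : ℕ}

/-- the simple reflection as a permutation -/
def sw (j : ℕ) (hj : j + 1 < n) : Perm (Fin n) :=
  Equiv.swap ⟨j, Nat.lt_of_succ_lt hj⟩ ⟨j + 1, hj⟩

lemma sw_val (j : ℕ) (hj : j + 1 < n) (x : Fin n) :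
    ((sw j hj) x).val = if x.val = j then j + 1 else if x.val = j + 1 then j else x.val := by
  rcases eq_or_ne x ⟨j, Nat.lt_of_succ_lt hj⟩ with rfl | h1
  · simp [sw, Equiv.swap_apply_left]
  · rcases eq_or_ne x ⟨j + 1, hj⟩ with rfl | h2
    · simp [sw, Equiv.swap_apply_right]
    · have e1 : x.val ≠ j := fun h => h1 (Fin.ext h)
      have e2 : x.val ≠ j + 1 := fun h => h2 (Fin.ext h)
      rw [sw, Equiv.swap_apply_of_ne_of_ne h1 h2, if_neg e1, if_neg e2]

lemma sw_lt_sw (j : ℕ) (hj : j + 1 < n) {u v : Fin n}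
    (h1 : ¬(u.val = j ∧ v.val = j + 1)) (h2 : ¬(u.val = j + 1 ∧ v.val = j)) :
    sw j hj u < sw j hj v ↔ u < v := by
  simp only [Fin.lt_def, sw_val]
  split_ifs <;> omega

lemma wordProd_nil : wordProd ([] : List {i : ℕ // i + 1 < n}) = 1 := rfl

lemma wordProd_cons (a : {i : ℕ // i + 1 < n}) (l : List {i : ℕ // i + 1 < n}) :
    wordProd (a :: l) = sw a.1 a.2 * wordProd l := by
  simp [wordProd, sw]

/-- number of positions `x < b` whose value is `≥ b` -/
def dd (w : Perm (Fin n)) (b : ℕ) : ℕ :=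
  (Finset.univ.filter fun x : Fin n => x.val < b ∧ b ≤ (w x).val).card

def Dsum (w : Perm (Fin n)) : ℕ := ∑ b ∈ Finset.range n, dd w b

lemma card_pos_lt (b : ℕ) (hb : b ≤ n) :
    (Finset.univ.filter fun x : Fin n => x.val < b).card = b := by
  have h : (Finset.univ.filter fun x : Fin n => x.val < b).card = (Finset.range b).card := by
    apply Finset.card_bij (fun x _ => x.val)
    · intro a ha; simp only [Finset.mem_filter] at ha; simpa using ha.2
    · intro a ha a' ha' h; exact Fin.ext h
    · intro c hc
      simp only [Finset.mem_range] at hc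
      exact ⟨⟨c, lt_of_lt_of_le hc hb⟩, by simp [hc], rfl⟩
  rw [h, Finset.card_range]

lemma card_val_lt (w : Perm (Fin n)) (b : ℕ) (hb : b ≤ n) :
    (Finset.univ.filter fun y : Fin n => (w y).val < b).card = b := by
  have h : (Finset.univ.filter fun y : Fin n => (w y).val < b).card
      = (Finset.univ.filter fun x : Fin n => x.val < b).card := by
    apply Finset.card_bij (fun y _ => w y)
    · intro a ha; simp only [Finset.mem_filter] at ha ⊢; exact ⟨Finset.mem_univ _, ha.2⟩
    · intro a _ a' _ h; exact w.injective h
    · intro c hc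
      simp only [Finset.mem_filter] at hc
      refine ⟨w⁻¹ c, ?_, by simp⟩
      simp only [Finset.mem_filter, Finset.mem_univ, true_and, Perm.coe_inv, apply_symm_apply]
      exact hc.2
  rw [h, card_pos_lt b hb]

end BoolPerm
namespace BoolPerm
variable {n : ℕ}

lemma len_sw_mul_of_lt (j : ℕ) (hj : j + 1 < n) (w : Perm (Fin n))
    (hlt : w⁻¹ ⟨j, Nat.lt_of_succ_lt hj⟩ < w⁻¹ ⟨j + 1, hj⟩) :
    len (sw j hj * w) = len w + 1 := by
  classical
  set u : Fin n := ⟨j, Nat.lt_of_succ_lt hj⟩ with hu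
  set v : Fin n := ⟨j + 1, hj⟩ with hv
  set p := w⁻¹ u with hp
  set q := w⁻¹ v with hq
  have hwp : w p = u := by simp [hp]
  have hwq : w q = v := by simp [hq]
  have key : ∀ a b : Fin n, ¬(a = p ∧ b = q) → ¬(a = q ∧ b = p) →
      ((sw j hj) (w b) < (sw j hj) (w a) ↔ w b < w a) := by
    intro a b h1 h2
    apply sw_lt_sw
    · rintro ⟨e1, e2⟩
      refine h2 ⟨?_, ?_⟩
      · apply w.injective; rw [hwq]; exact Fin.ext e2
      · apply w.injective; rw [hwp]; exact Fin.ext e1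
    · rintro ⟨e1, e2⟩
      refine h1 ⟨?_, ?_⟩
      · apply w.injective; rw [hwp]; exact Fin.ext e2
      · apply w.injective; rw [hwq]; exact Fin.ext e1
  have hset : (Finset.univ.filter fun z : Fin n × Fin n =>
        z.1 < z.2 ∧ (sw j hj * w) z.2 < (sw j hj * w) z.1)
      = insert (p, q) (Finset.univ.filter fun z : Fin n × Fin n =>
        z.1 < z.2 ∧ w z.2 < w z.1) := by
    ext ⟨a, b⟩
    simp only [Finset.mem_insert, Finset.mem_filter]
    simp only [Finset.mem_insert, Finset.mem_filter, Finset.mem_univ, true_and,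
      Equiv.Perm.mul_apply, Prod.mk.injEq]
    constructor
    · rintro ⟨hab, hvw⟩
      by_cases hc : a = p ∧ b = q
      · exact Or.inl hc
      · right
        refine ⟨hab, ?_⟩
        have h2 : ¬(a = q ∧ b = p) := by
          rintro ⟨rfl, rfl⟩; exact absurd hab (not_lt.mpr hlt.le)
        exact (key a b hc h2).mp hvw
    · rintro (⟨rfl, rfl⟩ | ⟨hab, hvw⟩)
      · refine ⟨hlt, ?_⟩
        rw [hwp, hwq]
        have e1 : (sw j hj) v = u := by rw [hu, hv, sw]; exact Equiv.swap_apply_right _ _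
        have e2 : (sw j hj) u = v := by rw [hu, hv, sw]; exact Equiv.swap_apply_left _ _
        rw [e1, e2]
        simp [hu, hv, Fin.lt_def]
      · have h1 : ¬(a = p ∧ b = q) := by
          rintro ⟨rfl, rfl⟩
          rw [hwp, hwq] at hvw
          simp [hu, hv, Fin.lt_def] at hvw
        have h2 : ¬(a = q ∧ b = p) := by
          rintro ⟨rfl, rfl⟩; exact absurd hab (not_lt.mpr hlt.le)
        exact ⟨hab, (key a b h1 h2).mpr hvw⟩
  have hnot : (p, q) ∉ (Finset.univ.filter fun z : Fin n × Fin n =>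
      z.1 < z.2 ∧ w z.2 < w z.1) := by
    simp only [Finset.mem_filter, Finset.mem_univ, true_and, not_and]
    intro _
    rw [hwp, hwq]
    simp [hu, hv, Fin.lt_def]
  rw [len, len, hset, Finset.card_insert_of_notMem hnot]

lemma len_sw_mul (j : ℕ) (hj : j + 1 < n) (w : Perm (Fin n)) :
    (w⁻¹ ⟨j, Nat.lt_of_succ_lt hj⟩ < w⁻¹ ⟨j + 1, hj⟩ ∧ len (sw j hj * w) = len w + 1) ∨
    (w⁻¹ ⟨j + 1, hj⟩ < w⁻¹ ⟨j, Nat.lt_of_succ_lt hj⟩ ∧ len w = len (sw j hj * w) + 1) := by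
  set u : Fin n := ⟨j, Nat.lt_of_succ_lt hj⟩ with hu
  set v : Fin n := ⟨j + 1, hj⟩ with hv
  have huv : u ≠ v := by simp [hu, hv, Fin.ext_iff]
  have hpq : w⁻¹ u ≠ w⁻¹ v := fun h => huv (w⁻¹.injective.eq_iff.mp h)
  rcases lt_or_gt_of_ne hpq with h | h
  · exact Or.inl ⟨h, len_sw_mul_of_lt j hj w h⟩
  · right
    refine ⟨h, ?_⟩
    have hsw : sw j hj * (sw j hj * w) = w := by
      rw [sw, Equiv.swap_mul_self_mul]
    have h2 : (sw j hj * w)⁻¹ u < (sw j hj * w)⁻¹ v := by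
      have e : (sw j hj)⁻¹ = sw j hj := by rw [sw, Equiv.swap_inv]
      have e1 : (sw j hj * w)⁻¹ u = w⁻¹ v := by
        rw [mul_inv_rev, Equiv.Perm.mul_apply, e]
        congr 1
        rw [hu, hv, sw]; exact Equiv.swap_apply_left _ _
      have e2 : (sw j hj * w)⁻¹ v = w⁻¹ u := by
        rw [mul_inv_rev, Equiv.Perm.mul_apply, e]
        congr 1
        rw [hu, hv, sw]; exact Equiv.swap_apply_right _ _
      rw [e1, e2]; exact h
    have := len_sw_mul_of_lt j hj (sw j hj * w) h2
    rw [hsw] at this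
    exact this

lemma len_one : len (1 : Perm (Fin n)) = 0 := by
  rw [len, Finset.card_eq_zero, Finset.filter_eq_empty_iff]
  rintro ⟨a, b⟩ -
  simp only [Equiv.Perm.one_apply, not_and]
  intro h
  exact asymm h

lemma len_le_length (l : List {i : ℕ // i + 1 < n}) : len (wordProd l) ≤ l.length := by
  induction l with
  | nil => simp [wordProd_nil, len_one]
  | cons a t ih =>
    rw [wordProd_cons]
    rcases len_sw_mul a.1 a.2 (wordProd t) with ⟨_, h⟩ | ⟨_, h⟩ <;>
      simp only [List.length_cons] <;> omega

end BoolPerm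
namespace BoolPerm
variable {n : ℕ}

lemma perm_strictMono_eq_one (w : Perm (Fin n)) (h : StrictMono w) : w = 1 := by
  have hr : Set.range w = Set.range (id : Fin n → Fin n) := by
    rw [Set.range_id]
    exact Set.range_eq_univ.mpr w.surjective
  have := (h.range_inj strictMono_id).mp hr
  ext x
  have hx : w x = x := congrFun this x
  simp [hx]

lemma eq_one_of_len_eq_zero (w : Perm (Fin n)) (h : len w = 0) : w = 1 := by
  apply perm_strictMono_eq_one
  intro a b hab
  rw [len, Finset.card_eq_zero, Finset.filter_eq_empty_iff] at h
  have := h (Finset.mem_univ (a, b))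
  simp only [not_and] at this
  have h2 := this hab
  rcases lt_trichotomy (w a) (w b) with h3 | h3 | h3
  · exact h3
  · exact absurd (w.injective h3) (ne_of_lt hab)
  · exact absurd h3 h2

lemma exists_descent (w : Perm (Fin n)) (hw : w ≠ 1) :
    ∃ (j : ℕ) (hj : j + 1 < n), w⁻¹ ⟨j + 1, hj⟩ < w⁻¹ ⟨j, Nat.lt_of_succ_lt hj⟩ := by
  by_contra hcon
  push_neg at hcon
  apply hw
  have hinv : StrictMono (w⁻¹ : Perm (Fin n)) := by
    match n, w, hcon with
    | 0, w, hcon => intro a; exact absurd a.2 (by omega)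
    | (m+1), w, hcon =>
      rw [Fin.strictMono_iff_lt_succ]
      intro i
      have hj : i.val + 1 < m + 1 := by omega
      have h1 := hcon i.val hj
      have hne : w⁻¹ (⟨i.val, Nat.lt_of_succ_lt hj⟩ : Fin (m+1)) ≠ w⁻¹ ⟨i.val + 1, hj⟩ := by
        intro h
        have := w⁻¹.injective h
        simp [Fin.ext_iff] at this
      have hc : (i.castSucc : Fin (m+1)) = ⟨i.val, Nat.lt_of_succ_lt hj⟩ := rfl
      have hs : (i.succ : Fin (m+1)) = ⟨i.val + 1, hj⟩ := rfl
      rw [hc, hs]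
      exact lt_of_le_of_ne h1 hne
  have : (w⁻¹ : Perm (Fin n)) = 1 := perm_strictMono_eq_one _ hinv
  rw [← inv_inv w, this]
  rfl

lemma exists_word_of_len (w : Perm (Fin n)) :
    ∃ l : List {i : ℕ // i + 1 < n}, wordProd l = w ∧ l.length = len w := by
  generalize hm : len w = m
  induction m using Nat.strong_induction_on generalizing w with
  | _ m ih =>
    rcases Nat.eq_zero_or_pos m with rfl | hpos
    · exact ⟨[], by rw [wordProd_nil, (eq_one_of_len_eq_zero w hm)], rfl⟩
    · have hw : w ≠ 1 := by
        intro h; rw [h, len_one] at hm; omega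
      obtain ⟨j, hj, hdesc⟩ := exists_descent w hw
      rcases len_sw_mul j hj w with ⟨h1, _⟩ | ⟨_, h2⟩
      · exact absurd hdesc (not_lt.mpr h1.le)
      · have hlt : len (sw j hj * w) < m := by omega
        obtain ⟨l', hl', hlen'⟩ := ih _ hlt (sw j hj * w) rfl
        refine ⟨⟨j, hj⟩ :: l', ?_, ?_⟩
        · rw [wordProd_cons, hl', sw, Equiv.swap_mul_self_mul]
        · simp only [List.length_cons, hlen']; omega

lemma isReducedWord_iff (w : Perm (Fin n)) (l : List {i : ℕ // i + 1 < n}) :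
    IsReducedWord w l ↔ wordProd l = w ∧ l.length = len w := by
  constructor
  · rintro ⟨hprod, hmin⟩
    obtain ⟨l0, hl0, hlen0⟩ := exists_word_of_len w
    refine ⟨hprod, le_antisymm ?_ ?_⟩
    · rw [← hlen0]; exact hmin l0 hl0
    · rw [← hprod]; exact len_le_length l
  · rintro ⟨hprod, hlen⟩
    refine ⟨hprod, fun l' hl' => ?_⟩
    rw [hlen, ← hl']
    exact len_le_length l'

end BoolPerm
namespace BoolPerm
variable {n : ℕ}

lemma sw_val_lt_iff (a : ℕ) (ha : a + 1 < n) (b : ℕ) (hb : a + 1 ≠ b) (y : Fin n) :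
    ((sw a ha) y).val < b ↔ y.val < b := by
  rw [sw_val]
  split_ifs <;> omega

/-- a word avoiding the letter `b - 1` preserves the boundary at `b` -/
lemma wordProd_boundary (b : ℕ) (l : List {i : ℕ // i + 1 < n})
    (hl : ∀ a ∈ l, a.1 + 1 ≠ b) (y : Fin n) :
    ((wordProd l) y).val < b ↔ y.val < b := by
  induction l with
  | nil => rw [wordProd_nil]; rfl
  | cons a t ih =>
    rw [wordProd_cons, Equiv.Perm.mul_apply,
      sw_val_lt_iff a.1 a.2 b (hl a List.mem_cons_self)]
    exact ih (fun c hc => hl c (List.mem_cons_of_mem a hc))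

lemma dd_eq_zero_of_boundary (w : Perm (Fin n)) (b : ℕ)
    (h : ∀ y : Fin n, (w y).val < b ↔ y.val < b) : dd w b = 0 := by
  rw [dd, Finset.card_eq_zero, Finset.filter_eq_empty_iff]
  intro x _
  rw [not_and, not_le]
  intro hx
  exact (h x).mpr hx

lemma dd_notmem (b : ℕ) (l : List {i : ℕ // i + 1 < n})
    (hl : ∀ a ∈ l, a.1 + 1 ≠ b) : dd (wordProd l) b = 0 :=
  dd_eq_zero_of_boundary _ _ (wordProd_boundary b l hl)

lemma dd_once (b : ℕ) (l1 l2 : List {i : ℕ // i + 1 < n}) (a : {i : ℕ // i + 1 < n})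
    (hb : a.1 + 1 = b) (h1 : ∀ c ∈ l1, c.1 + 1 ≠ b) (h2 : ∀ c ∈ l2, c.1 + 1 ≠ b) :
    dd (wordProd (l1 ++ a :: l2)) b = 1 := by
  have hsplit : wordProd (l1 ++ a :: l2) = wordProd l1 * (sw a.1 a.2 * wordProd l2) := by
    rw [wordProd, List.map_append, List.prod_append, ← wordProd, ← wordProd, wordProd_cons]
  set A := wordProd l1 with hAdef
  set B := wordProd l2 with hBdef
  have hA : ∀ y : Fin n, (A y).val < b ↔ y.val < b := wordProd_boundary b l1 h1
  have hB : ∀ y : Fin n, (B y).val < b ↔ y.val < b := wordProd_boundary b l2 h2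
  set x0 : Fin n := B⁻¹ ⟨a.1, Nat.lt_of_succ_lt a.2⟩ with hx0
  have hBx0 : B x0 = ⟨a.1, Nat.lt_of_succ_lt a.2⟩ := by simp [hx0]
  have hx0lt : x0.val < b := by
    have := (hB x0).mp (by rw [hBx0]; simp; omega)
    exact this
  have hkey : ∀ x : Fin n, (x.val < b ∧ b ≤ ((wordProd (l1 ++ a :: l2)) x).val) ↔ x = x0 := by
    intro x
    rw [hsplit]
    simp only [Equiv.Perm.mul_apply]
    constructor
    · rintro ⟨hxb, hge⟩
      have hBx : (B x).val < b := (hB x).mpr hxb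
      have hs : b ≤ ((sw a.1 a.2) (B x)).val := by
        by_contra hcon
        push_neg at hcon
        have := (hA ((sw a.1 a.2) (B x))).mpr hcon
        omega
      rw [sw_val] at hs
      split_ifs at hs with e1 e2
      · apply B.injective
        rw [hBx0]
        exact Fin.ext e1
      · omega
      · omega
    · rintro rfl
      refine ⟨hx0lt, ?_⟩
      have : ((sw a.1 a.2) (B x0)).val = a.1 + 1 := by
        rw [hBx0, sw_val]
        simp
      have hge : ¬ ((A ((sw a.1 a.2) (B x0))).val < b) := by
        rw [hA]
        omega
      omega
  rw [dd]
  have : (Finset.univ.filter fun x : Fin n =>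
      x.val < b ∧ b ≤ ((wordProd (l1 ++ a :: l2)) x).val) = {x0} := by
    ext x
    simp only [Finset.mem_filter, Finset.mem_univ, true_and, Finset.mem_singleton]
    exact hkey x
  rw [this, Finset.card_singleton]

/-- for a nodup word, `dd` equals the indicator of the letter set -/
lemma dd_nodup (l : List {i : ℕ // i + 1 < n}) (hl : l.Nodup) (b : ℕ) :
    dd (wordProd l) b = if ∃ a ∈ l, a.1 + 1 = b then 1 else 0 := by
  split_ifs with h
  · obtain ⟨a, hal, hab⟩ := h
    obtain ⟨t1, t2, rfl⟩ := List.append_of_mem hal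
    have hnd := hl
    rw [List.nodup_append] at hnd
    obtain ⟨hnd1, hnd2, hdisj⟩ := hnd
    rw [List.nodup_cons] at hnd2
    refine dd_once b t1 t2 a hab ?_ ?_
    · intro c hc hcb
      have : c = a := Subtype.ext (by omega)
      subst this
      exact hdisj c hc c List.mem_cons_self rfl
    · intro c hc hcb
      have : c = a := Subtype.ext (by omega)
      subst this
      exact hnd2.1 hc
  · push_neg at h
    exact dd_notmem b l h

lemma Dsum_nodup (l : List {i : ℕ // i + 1 < n}) (hl : l.Nodup) :
    Dsum (wordProd l) = l.length := by
  have himg : ∀ b ∈ Finset.range n, dd (wordProd l) b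
      = if b ∈ l.toFinset.image (fun a => a.1 + 1) then 1 else 0 := by
    intro b _
    rw [dd_nodup l hl b]
    congr 1
    simp only [Finset.mem_image, List.mem_toFinset]
  rw [Dsum, Finset.sum_congr rfl himg, Finset.sum_ite_mem,
    Finset.sum_const, smul_eq_mul, mul_one]
  have hsub : (Finset.range n) ∩ l.toFinset.image (fun a => a.1 + 1)
      = l.toFinset.image (fun a => a.1 + 1) := by
    apply Finset.inter_eq_right.mpr
    intro b hb
    simp only [Finset.mem_image, List.mem_toFinset] at hb
    obtain ⟨a, _, rfl⟩ := hb
    exact Finset.mem_range.mpr a.2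
  rw [hsub, Finset.card_image_of_injective _ (fun a a' h => Subtype.ext (by omega)),
    List.card_toFinset, hl.dedup]

end BoolPerm
namespace BoolPerm
variable {n : ℕ}

/-- inversions with left endpoint `x` -/
def rr (w : Perm (Fin n)) (x : Fin n) : ℕ :=
  (Finset.univ.filter fun y : Fin n => x < y ∧ w y < w x).card

lemma len_eq_sum_rr (w : Perm (Fin n)) : len w = ∑ x : Fin n, rr w x := by
  rw [len, Finset.card_eq_sum_card_fiberwise
    (fun q (_ : q ∈ _) => Finset.mem_univ q.1)]
  apply Finset.sum_congr rfl
  intro a _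
  apply Finset.card_bij (fun q _ => q.2)
  · rintro ⟨x, y⟩ hq
    simp only [Finset.mem_filter, Finset.mem_univ, true_and] at hq ⊢
    obtain ⟨⟨h1, h2⟩, rfl⟩ := hq
    exact ⟨h1, h2⟩
  · rintro ⟨x, y⟩ hq ⟨x', y'⟩ hq' h
    simp only [Finset.mem_filter] at hq hq'
    simp only at h
    rw [Prod.mk.injEq]
    exact ⟨hq.2.trans hq'.2.symm, h⟩
  · intro y hy
    simp only [Finset.mem_filter, Finset.mem_univ, true_and] at hy
    exact ⟨(a, y), by simp [hy], rfl⟩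

lemma Dsum_eq_sum (w : Perm (Fin n)) :
    Dsum w = ∑ x : Fin n, ((w x).val - x.val) := by
  rw [Dsum]
  have h1 : ∀ b ∈ Finset.range n, dd w b
      = ∑ x : Fin n, (if x.val < b ∧ b ≤ (w x).val then 1 else 0) := by
    intro b _
    rw [dd, Finset.card_filter]
  rw [Finset.sum_congr rfl h1, Finset.sum_comm]
  apply Finset.sum_congr rfl
  intro x _
  rw [← Finset.card_filter]
  have h2 : (Finset.range n).filter (fun b => x.val < b ∧ b ≤ (w x).val)
      = Finset.Ioc x.val (w x).val := by
    ext b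
    simp only [Finset.mem_filter, Finset.mem_range, Finset.mem_Ioc]
    have := (w x).isLt
    omega
  rw [h2, Nat.card_Ioc]

lemma rr_split (w : Perm (Fin n)) (x : Fin n) :
    rr w x + (Finset.univ.filter fun y : Fin n => (w y < w x) ∧ ¬ x < y).card
      = (w x).val := by
  have hb : (w x).val ≤ n := le_of_lt (w x).isLt
  have hcard : (Finset.univ.filter fun y : Fin n => (w y).val < (w x).val).card
      = (w x).val := card_val_lt w _ hb
  have hsplit := Finset.card_filter_add_card_filter_not
    (s := Finset.univ.filter fun y : Fin n => (w y).val < (w x).val)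
    (fun y : Fin n => x < y)
  rw [Finset.filter_filter, Finset.filter_filter, hcard] at hsplit
  have e1 : (Finset.univ.filter fun y : Fin n => (w y).val < (w x).val ∧ x < y)
      = Finset.univ.filter fun y : Fin n => x < y ∧ w y < w x := by
    apply Finset.filter_congr
    intro y _
    simp only [Fin.lt_def, and_comm]
  have e2 : (Finset.univ.filter fun y : Fin n => (w y).val < (w x).val ∧ ¬ x < y)
      = Finset.univ.filter fun y : Fin n => (w y < w x) ∧ ¬ x < y := by
    apply Finset.filter_congr
    intro y _
    simp only [Fin.lt_def]
  rw [e1, e2] at hsplit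
  rw [rr]
  exact hsplit

lemma small_le (w : Perm (Fin n)) (x : Fin n) :
    (Finset.univ.filter fun y : Fin n => (w y < w x) ∧ ¬ x < y).card ≤ x.val := by
  have hsub : (Finset.univ.filter fun y : Fin n => (w y < w x) ∧ ¬ x < y)
      ⊆ Finset.univ.filter fun y : Fin n => y.val < x.val := by
    intro y hy
    simp only [Finset.mem_filter, Finset.mem_univ, true_and] at hy ⊢
    rcases hy with ⟨h1, h2⟩
    rcases lt_or_eq_of_le (not_lt.mp h2) with h3 | h3
    · exact Fin.lt_def.mp h3
    · rw [h3] at h1; exact absurd h1 (lt_irrefl _)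
  calc _ ≤ (Finset.univ.filter fun y : Fin n => y.val < x.val).card := Finset.card_le_card hsub
    _ = x.val := card_pos_lt _ (le_of_lt x.isLt)

lemma rr_ge (w : Perm (Fin n)) (x : Fin n) : (w x).val - x.val ≤ rr w x := by
  have h1 := rr_split w x
  have h2 := small_le w x
  omega

lemma Dsum_le_len (w : Perm (Fin n)) : Dsum w ≤ len w := by
  rw [len_eq_sum_rr, Dsum_eq_sum]
  exact Finset.sum_le_sum fun x _ => rr_ge w x

lemma Dsum_lt_len_of_321 (w : Perm (Fin n)) (i j k : Fin n)
    (hij : i < j) (hjk : j < k) (h1 : w k < w j) (h2 : w j < w i) :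
    Dsum w < len w := by
  rw [len_eq_sum_rr, Dsum_eq_sum]
  apply Finset.sum_lt_sum (fun x _ => rr_ge w x)
  refine ⟨j, Finset.mem_univ j, ?_⟩
  have hsplit := rr_split w j
  -- the "small" set at j misses i
  have hsmall : (Finset.univ.filter fun y : Fin n => (w y < w j) ∧ ¬ j < y).card
      ≤ j.val - 1 := by
    have hsub : (Finset.univ.filter fun y : Fin n => (w y < w j) ∧ ¬ j < y)
        ⊆ (Finset.univ.filter fun y : Fin n => y.val < j.val).erase i := by
      intro y hy
      simp only [Finset.mem_filter, Finset.mem_univ, true_and, Finset.mem_erase] at hy ⊢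
      rcases hy with ⟨hy1, hy2⟩
      constructor
      · rintro rfl
        exact absurd h2 (not_lt.mpr hy1.le)
      · rcases lt_or_eq_of_le (not_lt.mp hy2) with h3 | h3
        · exact h3
        · rw [h3] at hy1; exact absurd hy1 (lt_irrefl _)
    have := Finset.card_le_card hsub
    have hmem : i ∈ Finset.univ.filter fun y : Fin n => y.val < j.val := by
      simp only [Finset.mem_filter, Finset.mem_univ, true_and]
      exact hij
    rw [Finset.card_erase_of_mem hmem, card_pos_lt _ (le_of_lt j.isLt)] at this
    exact this
  have hrpos : 0 < rr w j := by
    show 0 < (Finset.univ.filter fun y : Fin n => j < y ∧ w y < w j).card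
    apply Finset.card_pos.mpr
    exact ⟨k, by simp only [Finset.mem_filter, Finset.mem_univ, true_and]; exact ⟨hjk, h1⟩⟩
  have hj1 : 1 ≤ j.val := by
    have := hij
    rw [Fin.lt_def] at this
    omega
  omega

lemma len_eq_Dsum_of_no321 (w : Perm (Fin n))
    (h : ∀ i j k : Fin n, i < j → j < k → w k < w j → w j < w i → False) :
    len w = Dsum w := by
  rw [len_eq_sum_rr, Dsum_eq_sum]
  apply Finset.sum_congr rfl
  intro x _
  have hsplit := rr_split w x
  rcases Nat.eq_zero_or_pos (rr w x) with h0 | hpos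
  · -- no inversion at x: w x ≤ x
    have hsmall := small_le w x
    omega
  · -- there is z > x with w z < w x; all previous values are smaller
    obtain ⟨z, hz⟩ := Finset.card_pos.mp hpos
    simp only [Finset.mem_filter, Finset.mem_univ, true_and] at hz
    have hall : ∀ y : Fin n, y < x → w y < w x := by
      intro y hy
      rcases lt_trichotomy (w y) (w x) with h1 | h1 | h1
      · exact h1
      · exact absurd (w.injective h1) (ne_of_lt hy)
      · exact absurd (h y x z hy hz.1 hz.2 h1) not_false
    have hset : (Finset.univ.filter fun y : Fin n => (w y < w x) ∧ ¬ x < y)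
        = Finset.univ.filter fun y : Fin n => y.val < x.val := by
      ext y
      simp only [Finset.mem_filter, Finset.mem_univ, true_and]
      constructor
      · rintro ⟨h1, h2⟩
        rcases lt_or_eq_of_le (not_lt.mp h2) with h3 | h3
        · exact h3
        · rw [h3] at h1; exact absurd h1 (lt_irrefl _)
      · intro h1
        exact ⟨hall y h1, not_lt.mpr (le_of_lt h1)⟩
    rw [hset, card_pos_lt _ (le_of_lt x.isLt)] at hsplit
    omega

end BoolPerm
namespace BoolPerm
variable {n : ℕ}

lemma dd_count (w : Perm (Fin n)) (b : ℕ) (hb : b ≤ n) :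
    (Finset.univ.filter fun y : Fin n => b ≤ y.val ∧ (w y).val < b).card = dd w b := by
  have A1 := Finset.card_filter_add_card_filter_not
    (s := Finset.univ.filter fun y : Fin n => (w y).val < b) (fun y : Fin n => y.val < b)
  have A2 := Finset.card_filter_add_card_filter_not
    (s := Finset.univ.filter fun y : Fin n => y.val < b) (fun y : Fin n => (w y).val < b)
  rw [Finset.filter_filter, Finset.filter_filter, card_val_lt w b hb] at A1
  rw [Finset.filter_filter, Finset.filter_filter, card_pos_lt b hb] at A2
  have e1 : (Finset.univ.filter fun y : Fin n => (w y).val < b ∧ y.val < b)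
      = Finset.univ.filter fun y : Fin n => y.val < b ∧ (w y).val < b := by
    apply Finset.filter_congr; intro y _; exact and_comm
  have e2 : (Finset.univ.filter fun y : Fin n => y.val < b ∧ ¬ (w y).val < b)
      = Finset.univ.filter fun y : Fin n => y.val < b ∧ b ≤ (w y).val := by
    apply Finset.filter_congr; intro y _; simp [not_lt]
  have e3 : (Finset.univ.filter fun y : Fin n => (w y).val < b ∧ ¬ y.val < b)
      = Finset.univ.filter fun y : Fin n => b ≤ y.val ∧ (w y).val < b := by
    apply Finset.filter_congr; intro y _; simp [not_lt, and_comm]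
  rw [e1, e3] at A1
  rw [e2] at A2
  rw [dd] at *
  omega

lemma dd_eq_zero_of_ge (w : Perm (Fin n)) (b : ℕ) (hb : n ≤ b) : dd w b = 0 := by
  rw [dd, Finset.card_eq_zero, Finset.filter_eq_empty_iff]
  intro x _
  have := (w x).isLt
  omega

/-- `dd ≥ 2` forces a 321 or a 3412 pattern -/
lemma pattern_of_dd_ge2 (w : Perm (Fin n)) (b : ℕ) (h : 2 ≤ dd w b) :
    (∃ i j k : Fin n, i < j ∧ j < k ∧ w k < w j ∧ w j < w i) ∨
    (∃ p1 p2 p3 p4 : Fin n, p1 < p2 ∧ p2 < p3 ∧ p3 < p4 ∧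
      w p3 < w p4 ∧ w p4 < w p1 ∧ w p1 < w p2) := by
  have hb : b ≤ n := by
    by_contra hc
    rw [dd_eq_zero_of_ge w b (by omega)] at h
    omega
  obtain ⟨x1, hx1, x2, hx2, hx12⟩ := Finset.one_lt_card.mp (by omega : 1 < dd w b)
  have hY := dd_count w b hb
  obtain ⟨y1, hy1, y2, hy2, hy12⟩ := Finset.one_lt_card.mp
    (by rw [hY]; omega : 1 <
      (Finset.univ.filter fun y : Fin n => b ≤ y.val ∧ (w y).val < b).card)
  simp only [dd, Finset.mem_filter, Finset.mem_univ, true_and] at hx1 hx2 hy1 hy2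
  -- normalize: x1 < x2, y1 < y2
  wlog hxlt : x1 < x2 generalizing x1 x2 with W
  · exact W x2 x1 hx12.symm hx2 hx1
      (lt_of_le_of_ne (not_lt.mp hxlt) (fun hc => hx12 (Fin.ext (congrArg Fin.val hc)).symm))
  clear hx12
  wlog hylt : y1 < y2 generalizing y1 y2 with W2
  · exact W2 y2 y1 hy12.symm hy2 hy1
      (lt_of_le_of_ne (not_lt.mp hylt) (fun hc => hy12 (Fin.ext (congrArg Fin.val hc)).symm))
  clear hy12
  have hpos1 : x2 < y1 := by rw [Fin.lt_def]; omega
  have hval1 : w y1 < w x1 := by rw [Fin.lt_def]; omega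
  have hval2 : w y1 < w x2 := by rw [Fin.lt_def]; omega
  have hval3 : w y2 < w x1 := by rw [Fin.lt_def]; omega
  rcases lt_trichotomy (w x1) (w x2) with hx | hx | hx
  · rcases lt_trichotomy (w y1) (w y2) with hy | hy | hy
    · exact Or.inr ⟨x1, x2, y1, y2, hxlt, hpos1, hylt, hy, hval3, hx⟩
    · exact absurd (w.injective hy) (ne_of_lt hylt)
    · exact Or.inl ⟨x2, y1, y2, hpos1, hylt, hy, hval2⟩
  · exact absurd (w.injective hx) (ne_of_lt hxlt)
  · exact Or.inl ⟨x1, x2, y1, hxlt, hpos1, hval2, hx⟩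

/-- under condition C the permutation avoids 3412 -/
lemma no3412_of_C (w : Perm (Fin n)) (hdd : ∀ b, dd w b ≤ 1) (hlen : len w = Dsum w) :
    ¬ ∃ p1 p2 p3 p4 : Fin n, p1 < p2 ∧ p2 < p3 ∧ p3 < p4 ∧
      w p3 < w p4 ∧ w p4 < w p1 ∧ w p1 < w p2 := by
  have no321 : ∀ i j k : Fin n, i < j → j < k → w k < w j → w j < w i → False := by
    intro i j k h1 h2 h3 h4
    have := Dsum_lt_len_of_321 w i j k h1 h2 h3 h4
    omega
  suffices H : ∀ m : ℕ, ∀ p1 p2 p3 p4 : Fin n, p2.val * n + p1.val = m →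
      p1 < p2 → p2 < p3 → p3 < p4 → w p3 < w p4 → w p4 < w p1 → w p1 < w p2 → False by
    rintro ⟨p1, p2, p3, p4, h1, h2, h3, h4, h5, h6⟩
    exact H _ p1 p2 p3 p4 rfl h1 h2 h3 h4 h5 h6
  intro m
  induction m using Nat.strong_induction_on with
  | _ m ih =>
  intro p1 p2 p3 p4 hm h12 h23 h34 hv1 hv2 hv3
  set c := (w p1).val with hc
  by_cases hcase : p2.val < c
  · -- boundary p2.val + 1 has dd ≥ 2
    have hge : 2 ≤ dd w (p2.val + 1) := by
      have hsub : ({p1, p2} : Finset (Fin n)) ⊆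
          Finset.univ.filter fun x : Fin n => x.val < p2.val + 1 ∧ p2.val + 1 ≤ (w x).val := by
        intro z hz
        simp only [Finset.mem_insert, Finset.mem_singleton] at hz
        simp only [Finset.mem_filter, Finset.mem_univ, true_and]
        rcases hz with rfl | rfl
        · have : z < p2 := h12
          rw [Fin.lt_def] at this
          constructor
          · omega
          · omega
        · have : (w p1).val < (w z).val := Fin.lt_def.mp hv3
          constructor
          · omega
          · omega
      have hcard : ({p1, p2} : Finset (Fin n)).card = 2 := by
        rw [Finset.card_insert_of_notMem (by simp [ne_of_lt h12]), Finset.card_singleton]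
      calc 2 = ({p1, p2} : Finset (Fin n)).card := hcard.symm
        _ ≤ _ := Finset.card_le_card hsub
      
    have := hdd (p2.val + 1)
    rw [dd] at this hge
    omega
  · -- c ≤ p2.val : find another big value before p2
    push_neg at hcase
    have hcn : c ≤ n := le_of_lt (w p1).isLt
    -- the小 set
    set S1 := Finset.univ.filter fun y : Fin n => y.val < p2.val ∧ (w y).val < c with hS1
    set Q := Finset.univ.filter fun y : Fin n => y.val < p2.val ∧ ¬ (w y).val < c with hQ
    have hsplit := Finset.card_filter_add_card_filter_not
      (s := Finset.univ.filter fun y : Fin n => y.val < p2.val) (fun y : Fin n => (w y).val < c)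
    rw [Finset.filter_filter, Finset.filter_filter, card_pos_lt _ (le_of_lt p2.isLt)] at hsplit
    rw [← hS1, ← hQ] at hsplit
    have hS1card : S1.card + 2 ≤ c := by
      have hmem4 : p4 ∉ insert p3 S1 := by
        simp only [Finset.mem_insert, hS1, Finset.mem_filter, Finset.mem_univ, true_and]
        push_neg
        refine ⟨ne_of_lt h34 |>.symm, fun hlt => ?_⟩
        have : p2 < p4 := h23.trans h34
        rw [Fin.lt_def] at this
        omega
      have hmem3 : p3 ∉ S1 := by
        simp only [hS1, Finset.mem_filter, Finset.mem_univ, true_and]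
        push_neg
        intro hlt
        rw [Fin.lt_def] at h23
        omega
      have hsub : insert p4 (insert p3 S1) ⊆
          Finset.univ.filter fun y : Fin n => (w y).val < c := by
        intro z hz
        simp only [Finset.mem_insert, hS1, Finset.mem_filter, Finset.mem_univ, true_and] at hz ⊢
        rcases hz with rfl | rfl | hz
        · exact Fin.lt_def.mp hv2
        · exact Fin.lt_def.mp (hv1.trans hv2)
        · exact hz.2
      have := Finset.card_le_card hsub
      rw [Finset.card_insert_of_notMem hmem4, Finset.card_insert_of_notMem hmem3,
        card_val_lt w c hcn] at this
      omega
    have hQcard : 2 ≤ Q.card := by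
      rw [Fin.lt_def] at h12
      omega
    obtain ⟨q, hq, hqp1⟩ := Finset.exists_mem_ne (s := Q) (by omega) p1
    rw [hQ, Finset.mem_filter] at hq
    obtain ⟨-, hq2, hq3⟩ := hq
    push_neg at hq3
    have hqval : c < (w q).val := by
      rcases lt_or_eq_of_le hq3 with h | h
      · exact h
      · exact absurd (w.injective (Fin.ext h.symm)) hqp1
    have hqp2 : q < p2 := Fin.lt_def.mpr hq2
    have hqwp2 : w q < w p2 := by
      rcases lt_trichotomy (w q) (w p2) with h | h | h
      · exact h
      · exact absurd (w.injective h) (ne_of_lt hqp2)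
      · exact absurd (no321 q p2 p3 hqp2 h23 ((hv1.trans hv2).trans hv3) h) not_false
    have hn0 : 0 < n := lt_of_le_of_lt (Nat.zero_le _) p1.isLt
    rcases lt_or_gt_of_ne hqp1 with hlt | hgt
    · -- q < p1 : occurrence (q, p2, p3, p4)
      apply ih (p2.val * n + q.val) (by rw [Fin.lt_def] at hlt; omega) q p2 p3 p4 rfl
        hqp2 h23 h34 hv1 ?_ hqwp2
      rw [Fin.lt_def]
      have : (w p4).val < c := Fin.lt_def.mp hv2
      omega
    · -- p1 < q : occurrence (p1, q, p3, p4)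
      have hmlt : q.val * n + p1.val < m := by
        rw [← hm]
        have := (Nat.mul_lt_mul_right hn0).mpr hq2
        omega
      apply ih (q.val * n + p1.val) hmlt p1 q p3 p4 rfl hgt (hqp2.trans h23) h34 hv1 hv2 ?_
      rw [Fin.lt_def]
      omega

end BoolPerm
namespace BoolPerm
variable {n : ℕ}

lemma dd_sw_mul_ne (j : ℕ) (hj : j + 1 < n) (w : Perm (Fin n)) (b : ℕ) (hb : j + 1 ≠ b) :
    dd (sw j hj * w) b = dd w b := by
  rw [dd, dd]
  congr 1
  apply Finset.filter_congr
  intro x _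
  simp only [Equiv.Perm.mul_apply]
  have := sw_val_lt_iff j hj b hb (w x)
  constructor <;> rintro ⟨h1, h2⟩ <;> exact ⟨h1, by omega⟩

lemma exists_good_boundary (w : Perm (Fin n)) (hdd : ∀ b, dd w b ≤ 1)
    (hlen : len w = Dsum w) (hw : w ≠ 1) :
    ∃ (b : ℕ) (hb : b < n), 1 ≤ b ∧ dd w b = 1 ∧ (w⁻¹ ⟨b, hb⟩).val < b ∧
      ∀ (hb' : b - 1 < n), b ≤ (w⁻¹ ⟨b - 1, hb'⟩).val := by
  have no321 : ∀ i j k : Fin n, i < j → j < k → w k < w j → w j < w i → False := by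
    intro i j k h1 h2 h3 h4
    have := Dsum_lt_len_of_321 w i j k h1 h2 h3 h4
    omega
  have hne : (Finset.univ.filter fun x : Fin n => w x ≠ x).Nonempty := by
    by_contra hc
    rw [Finset.not_nonempty_iff_eq_empty, Finset.filter_eq_empty_iff] at hc
    apply hw
    ext x
    have := hc (Finset.mem_univ x)
    simp only [ne_eq, not_not] at this
    simp [this]
  set k := (Finset.univ.filter fun x : Fin n => w x ≠ x).min' hne with hk
  have hkmem : w k ≠ k := by
    have := Finset.min'_mem _ hne
    rw [← hk] at this
    exact (Finset.mem_filter.mp this).2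
  have hkmin : ∀ x : Fin n, x < k → w x = x := by
    intro x hx
    by_contra hc
    have : k ≤ x := Finset.min'_le _ x (Finset.mem_filter.mpr ⟨Finset.mem_univ x, hc⟩)
    exact absurd hx (not_lt.mpr this)
  set v := w k with hv
  have hkv : k.val < v.val := by
    rcases lt_trichotomy k.val v.val with h | h | h
    · exact h
    · exact absurd (Fin.ext h) (Ne.symm hkmem)
    · exfalso
      have hfix : w v = v := hkmin v (Fin.lt_def.mpr h)
      have hvk : v = k := w.injective (hfix.trans hv)
      exact hkmem (hv.symm.trans hvk)
  refine ⟨v.val, v.isLt, by omega, ?_, ?_, ?_⟩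
  · -- dd w v.val = 1
    have hge : 1 ≤ dd w v.val := by
      rw [dd]
      apply Finset.card_pos.mpr
      exact ⟨k, Finset.mem_filter.mpr ⟨Finset.mem_univ k, hkv, le_refl _⟩⟩
    have := hdd v.val
    omega
  · have : w⁻¹ v = k := by simp [hv]
    rw [this]
    exact hkv
  · intro hb'
    by_contra hcon
    push_neg at hcon
    set x := w⁻¹ ⟨v.val - 1, hb'⟩ with hx
    have hwx : w x = ⟨v.val - 1, hb'⟩ := by simp [hx]
    have hxk : k < x := by
      rcases lt_trichotomy k x with h | h | h
      · exact h
      · exfalso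
        rw [← h, ← hv] at hwx
        have : v.val = v.val - 1 := congrArg Fin.val hwx
        omega
      · exfalso
        have := hkmin x h
        rw [this] at hwx
        have : x.val = v.val - 1 := congrArg Fin.val hwx
        rw [Fin.lt_def] at h
        omega
    -- find a small value at a position ≥ v.val
    have hcount : (Finset.univ.filter fun y : Fin n => v.val ≤ y.val ∧ (w y).val < v.val).card
        = dd w v.val := dd_count w v.val (le_of_lt v.isLt)
    have hdd1 : 1 ≤ dd w v.val := by
      rw [dd]
      apply Finset.card_pos.mpr
      exact ⟨k, Finset.mem_filter.mpr ⟨Finset.mem_univ k, hkv, le_refl _⟩⟩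
    obtain ⟨y, hy⟩ := Finset.card_pos.mp (by omega : 0 < (Finset.univ.filter
      fun y : Fin n => v.val ≤ y.val ∧ (w y).val < v.val).card)
    simp only [Finset.mem_filter, Finset.mem_univ, true_and] at hy
    have hyx : x ≠ y := by
      intro h
      rw [← h] at hy
      have : x.val < v.val := hcon
      omega
    have hwyval : (w y).val < v.val - 1 := by
      have : w y ≠ ⟨v.val - 1, hb'⟩ := fun h => hyx (w.injective (hwx.trans h.symm))
      have hne2 : (w y).val ≠ v.val - 1 := fun h => this (Fin.ext h)
      omega
    apply no321 k x y hxk (Fin.lt_def.mpr (by omega)) ?_ ?_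
    · rw [hwx, Fin.lt_def]
      exact hwyval
    · rw [hwx, ← hv, Fin.lt_def]
      simp only
      omega

lemma exists_nodup_word_of_C (w : Perm (Fin n)) (hdd : ∀ b, dd w b ≤ 1)
    (hlen : len w = Dsum w) :
    ∃ l : List {i : ℕ // i + 1 < n}, wordProd l = w ∧ l.length = len w ∧ l.Nodup := by
  generalize hm : len w = m
  induction m using Nat.strong_induction_on generalizing w with
  | _ m ih =>
  rcases Nat.eq_zero_or_pos m with rfl | hpos
  · exact ⟨[], by rw [wordProd_nil, eq_one_of_len_eq_zero w hm], rfl, List.nodup_nil⟩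
  have hw : w ≠ 1 := fun h => by rw [h, len_one] at hm; omega
  obtain ⟨b, hb, hb1, hddb, hposb, hposb1⟩ := exists_good_boundary w hdd hlen hw
  obtain ⟨j, rfl⟩ : ∃ j, j + 1 = b := ⟨b - 1, by omega⟩
  set w' := sw j hb * w with hw'
  have hposb1' : j + 1 ≤ (w⁻¹ ⟨j, Nat.lt_of_succ_lt hb⟩).val := by
    have hb' : j + 1 - 1 < n := by omega
    have e : (⟨j + 1 - 1, hb'⟩ : Fin n) = ⟨j, Nat.lt_of_succ_lt hb⟩ :=
      Fin.ext (Nat.succ_sub_one j)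
    have h := hposb1 hb'
    rwa [e] at h
  have hdesc : w⁻¹ ⟨j + 1, hb⟩ < w⁻¹ ⟨j, Nat.lt_of_succ_lt hb⟩ := by
    rw [Fin.lt_def]
    omega
  have hlen' : len w = len w' + 1 := by
    rcases len_sw_mul j hb w with ⟨h1, _⟩ | ⟨_, h2⟩
    · exact absurd hdesc (not_lt.mpr h1.le)
    · exact h2
  have hddb' : dd w' (j + 1) = 0 := by
    rw [dd, Finset.card_eq_zero, Finset.filter_eq_empty_iff]
    intro x _
    rw [not_and, not_le]
    intro hx
    rw [hw', Equiv.Perm.mul_apply, sw_val]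
    split_ifs with e1 e2
    · -- (w x).val = j : impossible, that value sits at position ≥ j + 1
      exfalso
      have hwxe : w x = ⟨j, Nat.lt_of_succ_lt hb⟩ := Fin.ext e1
      have hxe : x = w⁻¹ ⟨j, Nat.lt_of_succ_lt hb⟩ := by rw [← hwxe]; simp
      rw [← hxe] at hposb1'
      omega
    · omega
    · -- (w x).val ∉ {j, j+1} : show (w x).val < j + 1
      by_contra hc
      push_neg at hc
      have hx2 : j + 1 < (w x).val := by omega
      have h2 : 2 ≤ dd w (j + 1) := by
        have hsub : ({x, w⁻¹ ⟨j + 1, hb⟩} : Finset (Fin n)) ⊆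
            Finset.univ.filter fun z : Fin n => z.val < j + 1 ∧ j + 1 ≤ (w z).val := by
          intro z hz
          simp only [Finset.mem_insert, Finset.mem_singleton] at hz
          simp only [Finset.mem_filter, Finset.mem_univ, true_and]
          rcases hz with rfl | rfl
          · exact ⟨hx, by omega⟩
          · refine ⟨hposb, ?_⟩
            simp
        have hne2 : x ≠ w⁻¹ ⟨j + 1, hb⟩ := by
          intro h
          rw [h] at hx2
          simp at hx2
        have hcard : ({x, w⁻¹ ⟨j + 1, hb⟩} : Finset (Fin n)).card = 2 := by
          rw [Finset.card_insert_of_notMem (by simpa using hne2), Finset.card_singleton]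
        calc 2 = _ := hcard.symm
          _ ≤ _ := Finset.card_le_card hsub
      rw [dd] at h2
      have := hdd (j + 1)
      rw [dd] at this
      omega
  have hddother : ∀ b' : ℕ, b' ≠ j + 1 → dd w' b' = dd w b' := by
    intro b' hb'
    rw [hw']
    exact dd_sw_mul_ne j hb w b' (Ne.symm hb')
  have hDsum' : Dsum w' + 1 = Dsum w := by
    have hbmem : j + 1 ∈ Finset.range n := Finset.mem_range.mpr hb
    have e1 : Dsum w = dd w (j + 1) + ∑ b' ∈ (Finset.range n).erase (j + 1), dd w b' :=
      (Finset.add_sum_erase _ _ hbmem).symm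
    have e2 : Dsum w' = dd w' (j + 1) + ∑ b' ∈ (Finset.range n).erase (j + 1), dd w' b' :=
      (Finset.add_sum_erase _ _ hbmem).symm
    have e3 : ∑ b' ∈ (Finset.range n).erase (j + 1), dd w' b'
        = ∑ b' ∈ (Finset.range n).erase (j + 1), dd w b' := by
      apply Finset.sum_congr rfl
      intro b' hb'
      exact hddother b' (Finset.ne_of_mem_erase hb')
    rw [e1, e2, e3, hddb, hddb']
    omega
  have hdd'le : ∀ b', dd w' b' ≤ 1 := by
    intro b'
    rcases eq_or_ne b' (j + 1) with rfl | hne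
    · omega
    · rw [hddother b' hne]; exact hdd b'
  have hlenDsum' : len w' = Dsum w' := by omega
  obtain ⟨l', hl'prod, hl'len, hl'nd⟩ := ih (len w') (by omega) w' hdd'le hlenDsum' rfl
  have hnotmem : (⟨j, hb⟩ : {i : ℕ // i + 1 < n}) ∉ l' := by
    intro hmem
    have := dd_nodup l' hl'nd (j + 1)
    rw [hl'prod, if_pos ⟨⟨j, hb⟩, hmem, rfl⟩, hddb'] at this
    omega
  refine ⟨⟨j, hb⟩ :: l', ?_, ?_, ?_⟩
  · rw [wordProd_cons, hl'prod, hw', sw, Equiv.swap_mul_self_mul]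
  · simp only [List.length_cons, hl'len]
    omega
  · exact List.nodup_cons.mpr ⟨hnotmem, hl'nd⟩

end BoolPerm
namespace BoolPerm
variable {n : ℕ}

lemma pat321_of (w : Perm (Fin n)) (i j k : Fin n) (hij : i < j) (hjk : j < k)
    (h1 : w k < w j) (h2 : w j < w i) : ContainsPat w pat321 := by
  refine ⟨![i, j, k], ?_, ?_⟩
  · intro a b hab
    have h3 : i < k := hij.trans hjk
    fin_cases a <;> fin_cases b <;>
      first
        | exact absurd hab (by decide)
        | simpa using hij
        | simpa using hjk
        | simpa using h3
        | exact hij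
        | exact hjk
        | exact h3
  · intro a b
    have h3 : w k < w i := h1.trans h2
    fin_cases a <;> fin_cases b
    · exact iff_of_false (by decide) (lt_irrefl _)
    · exact iff_of_false (by decide) (asymm h2)
    · exact iff_of_false (by decide) (asymm h3)
    · exact iff_of_true (by decide) h2
    · exact iff_of_false (by decide) (lt_irrefl _)
    · exact iff_of_false (by decide) (asymm h1)
    · exact iff_of_true (by decide) h3
    · exact iff_of_true (by decide) h1
    · exact iff_of_false (by decide) (lt_irrefl _)

lemma of_pat321 (w : Perm (Fin n)) (h : ContainsPat w pat321) :
    ∃ i j k : Fin n, i < j ∧ j < k ∧ w k < w j ∧ w j < w i := by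
  obtain ⟨f, hm, hiff⟩ := h
  refine ⟨f ⟨0, by decide⟩, f ⟨1, by decide⟩, f ⟨2, by decide⟩,
    hm (by decide), hm (by decide), ?_, ?_⟩
  · exact (hiff ⟨2, by decide⟩ ⟨1, by decide⟩).mp (by decide)
  · exact (hiff ⟨1, by decide⟩ ⟨0, by decide⟩).mp (by decide)

lemma pat3412_of (w : Perm (Fin n)) (p1 p2 p3 p4 : Fin n)
    (h12 : p1 < p2) (h23 : p2 < p3) (h34 : p3 < p4)
    (hv1 : w p3 < w p4) (hv2 : w p4 < w p1) (hv3 : w p1 < w p2) :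
    ContainsPat w pat3412 := by
  refine ⟨![p1, p2, p3, p4], ?_, ?_⟩
  · intro a b hab
    have h13 : p1 < p3 := h12.trans h23
    have h14 : p1 < p4 := h13.trans h34
    have h24 : p2 < p4 := h23.trans h34
    fin_cases a <;> fin_cases b <;>
      first
        | exact absurd hab (by decide)
        | simpa using h12
        | simpa using h23
        | simpa using h34
        | simpa using h13
        | simpa using h14
        | simpa using h24
        | exact h12
        | exact h23
        | exact h34
        | exact h13
        | exact h14
        | exact h24
  · intro a b
    have t20 : w p3 < w p1 := hv1.trans hv2
    have t21 : w p3 < w p2 := t20.trans hv3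
    have t30 : w p4 < w p1 := hv2
    have t31 : w p4 < w p2 := hv2.trans hv3
    fin_cases a <;> fin_cases b
    · exact iff_of_false (by decide) (lt_irrefl _)
    · exact iff_of_true (by decide) hv3
    · exact iff_of_false (by decide) (asymm t20)
    · exact iff_of_false (by decide) (asymm t30)
    · exact iff_of_false (by decide) (asymm hv3)
    · exact iff_of_false (by decide) (lt_irrefl _)
    · exact iff_of_false (by decide) (asymm t21)
    · exact iff_of_false (by decide) (asymm t31)
    · exact iff_of_true (by decide) t20
    · exact iff_of_true (by decide) t21
    · exact iff_of_false (by decide) (lt_irrefl _)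
    · exact iff_of_true (by decide) hv1
    · exact iff_of_true (by decide) t30
    · exact iff_of_true (by decide) t31
    · exact iff_of_false (by decide) (asymm hv1)
    · exact iff_of_false (by decide) (lt_irrefl _)

lemma of_pat3412 (w : Perm (Fin n)) (h : ContainsPat w pat3412) :
    ∃ p1 p2 p3 p4 : Fin n, p1 < p2 ∧ p2 < p3 ∧ p3 < p4 ∧
      w p3 < w p4 ∧ w p4 < w p1 ∧ w p1 < w p2 := by
  obtain ⟨f, hm, hiff⟩ := h
  refine ⟨f ⟨0, by decide⟩, f ⟨1, by decide⟩, f ⟨2, by decide⟩, f ⟨3, by decide⟩,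
    hm (by decide), hm (by decide), hm (by decide), ?_, ?_, ?_⟩
  · exact (hiff ⟨2, by decide⟩ ⟨3, by decide⟩).mp (by decide)
  · exact (hiff ⟨3, by decide⟩ ⟨0, by decide⟩).mp (by decide)
  · exact (hiff ⟨0, by decide⟩ ⟨1, by decide⟩).mp (by decide)

end BoolPerm

open BoolPerm

theorem stmt0 (n : ℕ) (w : Perm (Fin n)) :
    (∃ l : List {i : ℕ // i + 1 < n}, IsReducedWord w l ∧ l.Nodup) ↔
      (¬ ContainsPat w pat321 ∧ ¬ ContainsPat w pat3412) := by

  constructor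
  · rintro ⟨l, hred, hnd⟩
    rw [isReducedWord_iff] at hred
    obtain ⟨hprod, hlen⟩ := hred
    have hdd : ∀ b, dd w b ≤ 1 := by
      intro b
      rw [← hprod, dd_nodup l hnd b]
      split_ifs <;> omega
    have hDsum : Dsum w = l.length := by rw [← hprod, Dsum_nodup l hnd]
    have hlenD : len w = Dsum w := by omega
    constructor
    · intro hc
      obtain ⟨i, j, k, h1, h2, h3, h4⟩ := of_pat321 w hc
      have := Dsum_lt_len_of_321 w i j k h1 h2 h3 h4
      omega
    · intro hc
      exact no3412_of_C w hdd hlenD (of_pat3412 w hc)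
  · rintro ⟨h1, h2⟩
    have no321 : ∀ i j k : Fin n, i < j → j < k → w k < w j → w j < w i → False :=
      fun i j k a b c d => h1 (pat321_of w i j k a b c d)
    have hlenD : len w = Dsum w := len_eq_Dsum_of_no321 w no321
    have hdd : ∀ b, dd w b ≤ 1 := by
      intro b
      by_contra hcon
      push_neg at hcon
      rcases pattern_of_dd_ge2 w b (by omega) with ⟨i, j, k, a, b', c, d⟩ |
        ⟨p1, p2, p3, p4, q1, q2, q3, q4, q5, q6⟩
      · exact no321 i j k a b' c d
      · exact h2 (pat3412_of w p1 p2 p3 p4 q1 q2 q3 q4 q5 q6)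
    obtain ⟨l, hprod, hlen, hnd⟩ := exists_nodup_word_of_C w hdd hlenD
    exact ⟨l, (isReducedWord_iff w l).mpr ⟨hprod, hlen⟩, hnd⟩
end

section
/- For permutations v, w in S_n, v ≤ w in Bruhat order if and only if for every i with 1 ≤ i ≤ n, the set {v(1),...,v(i)}, when sorted increasingly as a_1 < ... < a_i, is dominated entrywise by the sorted set {w(1),...,w(i)} = {b_1 < ... < b_i}, i.e. a_j ≤ b_j for all j. -/
open Equiv

/-- the values in the first `i` positions of `v`, sorted increasingly -/
def sortedPref {n : ℕ} (v : Perm (Fin n)) (i : ℕ) : List ℕ :=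
  ((prefSet v i).sort (· ≤ ·)).map Fin.val


set_option linter.unusedVariables false
set_option linter.unreachableTactic false
set_option linter.unusedTactic false

section BruhatAux
open Finset

variable {n : ℕ}



variable {n : ℕ}

/-- position-count form of rank numbers -/
def Rk (v : Perm (Fin n)) (i k : ℕ) : ℕ :=
  (Finset.univ.filter fun m : Fin n => (m : ℕ) < i ∧ k ≤ (v m : ℕ)).card

lemma card_split (x y : Fin n) (hxy : x ≠ y) (C : Fin n → Prop) [DecidablePred C] :
    (Finset.univ.filter C).card =
      (Finset.univ.filter fun u => C u ∧ u ≠ x ∧ u ≠ y).card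
        + ((if C x then 1 else 0) + (if C y then 1 else 0)) := by
  classical
  have h1 : Finset.univ.filter C =
      (Finset.univ.filter fun u => C u ∧ u ≠ x ∧ u ≠ y) ∪ (({x, y} : Finset (Fin n)).filter C) := by
    ext u
    by_cases hux : u = x <;> by_cases huy : u = y <;> simp [hux, huy, Finset.mem_filter] <;> tauto
  have h2 : Disjoint (Finset.univ.filter fun u => C u ∧ u ≠ x ∧ u ≠ y)
      (({x, y} : Finset (Fin n)).filter C) := by
    rw [Finset.disjoint_left]
    intro u hu hu2
    simp only [Finset.mem_filter, Finset.mem_insert, Finset.mem_singleton] at hu hu2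
    tauto
  rw [h1, Finset.card_union_of_disjoint h2]
  congr 1
  rw [Finset.filter_insert, Finset.filter_singleton]
  by_cases hx : C x <;> by_cases hy : C y <;>
    simp [hx, hy, Finset.card_insert_of_notMem, hxy]

lemma Rk_swap_split (a : Perm (Fin n)) (x y : Fin n) (hxy : x ≠ y) (i k : ℕ) :
    Rk (a * Equiv.swap x y) i k
      = (Finset.univ.filter fun u : Fin n => ((u:ℕ) < i ∧ k ≤ (a u : ℕ)) ∧ u ≠ x ∧ u ≠ y).card
        + ((if (x:ℕ) < i ∧ k ≤ (a y : ℕ) then 1 else 0)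
          + (if (y:ℕ) < i ∧ k ≤ (a x : ℕ) then 1 else 0)) := by
  classical
  rw [Rk, card_split x y hxy]
  congr 2
  · apply Finset.filter_congr
    intro u _
    constructor
    · rintro ⟨⟨h1, h2⟩, h3, h4⟩
      refine ⟨⟨h1, ?_⟩, h3, h4⟩
      rwa [Perm.mul_apply, Equiv.swap_apply_of_ne_of_ne h3 h4] at h2
    · rintro ⟨⟨h1, h2⟩, h3, h4⟩
      refine ⟨⟨h1, ?_⟩, h3, h4⟩
      rwa [Perm.mul_apply, Equiv.swap_apply_of_ne_of_ne h3 h4]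
  · simp [Perm.mul_apply, Equiv.swap_apply_left, Equiv.swap_apply_right]
  · simp [Perm.mul_apply, Equiv.swap_apply_left, Equiv.swap_apply_right]

lemma Rk_split (a : Perm (Fin n)) (x y : Fin n) (hxy : x ≠ y) (i k : ℕ) :
    Rk a i k
      = (Finset.univ.filter fun u : Fin n => ((u:ℕ) < i ∧ k ≤ (a u : ℕ)) ∧ u ≠ x ∧ u ≠ y).card
        + ((if (x:ℕ) < i ∧ k ≤ (a x : ℕ) then 1 else 0)
          + (if (y:ℕ) < i ∧ k ≤ (a y : ℕ) then 1 else 0)) := by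
  classical
  rw [Rk, card_split x y hxy]

/-- prefSets (hence Rk) unchanged when both swap positions are < i or both ≥ i -/
lemma Rk_swap_out (a : Perm (Fin n)) (x y : Fin n) (hxy : x ≠ y)
    (i k : ℕ) (h : ((x:ℕ) < i ∧ (y:ℕ) < i) ∨ (i ≤ (x:ℕ) ∧ i ≤ (y:ℕ))) :
    Rk (a * Equiv.swap x y) i k = Rk a i k := by
  rw [Rk_swap_split a x y hxy, Rk_split a x y hxy]
  rcases h with ⟨h1, h2⟩ | ⟨h1, h2⟩
  · simp only [h1, h2, true_and]
    omega
  · have hx : ¬ (x:ℕ) < i := by omega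
    have hy : ¬ (y:ℕ) < i := by omega
    simp [hx, hy]

/-- swap with x-position inside, y-position outside -/
lemma Rk_swap_mid (a : Perm (Fin n)) (x y : Fin n) (hxy : x ≠ y)
    (i k : ℕ) (hx : (x:ℕ) < i) (hy : i ≤ (y:ℕ)) :
    Rk (a * Equiv.swap x y) i k
      = Rk a i k + (if k ≤ (a y : ℕ) then 1 else 0) - (if k ≤ (a x : ℕ) then 1 else 0) := by
  rw [Rk_swap_split a x y hxy, Rk_split a x y hxy]
  have : ¬ (y:ℕ) < i := by omega
  by_cases h1 : k ≤ (a x : ℕ) <;> by_cases h2 : k ≤ (a y : ℕ) <;>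
    simp [hx, this, h1, h2]






def invSet (c : Perm (Fin n)) : Finset (Fin n × Fin n) :=
  Finset.univ.filter fun q : Fin n × Fin n => q.1 < q.2 ∧ c q.2 < c q.1

lemma len_eq (c : Perm (Fin n)) : len c = (invSet c).card := rfl

/-- the pair map used for the inversion injections -/
def Fmap (x y : Fin n) (p : Fin n × Fin n) : Fin n × Fin n :=
  if Equiv.swap x y p.1 < Equiv.swap x y p.2 then (Equiv.swap x y p.1, Equiv.swap x y p.2) else p

lemma Fmap_injOn (x y : Fin n) :
    Set.InjOn (Fmap x y) {p : Fin n × Fin n | p.1 < p.2} := by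
  intro p hp q hq h
  simp only [Set.mem_setOf_eq] at hp hq
  unfold Fmap at h
  by_cases h1 : Equiv.swap x y p.1 < Equiv.swap x y p.2 <;>
    by_cases h2 : Equiv.swap x y q.1 < Equiv.swap x y q.2 <;> simp [h1, h2] at h
  · exact Prod.ext h.1 h.2
  · exfalso
    apply h2
    rw [← h, Equiv.swap_apply_self, Equiv.swap_apply_self]
    exact hp
  · exfalso
    apply h1
    rw [h, Equiv.swap_apply_self, Equiv.swap_apply_self]
    exact hq
  · exact h

lemma swap_sq (c : Perm (Fin n)) (x y : Fin n) : (c * Equiv.swap x y) * Equiv.swap x y = c := by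
  rw [mul_assoc, Equiv.swap_mul_self, mul_one]

lemma Fmap_mem_of_mem (c : Perm (Fin n)) (x y : Fin n) (hxy : x < y) (hc : c x < c y) :
    ∀ p ∈ insert (x, y) (invSet c), Fmap x y p ∈ invSet (c * Equiv.swap x y) := by
  intro p hp
  have hinj : Function.Injective c := c.injective
  rcases Finset.mem_insert.mp hp with rfl | hp
  · have h1 : Equiv.swap x y (x, y).1 = y := Equiv.swap_apply_left x y
    have h2 : Equiv.swap x y (x, y).2 = x := Equiv.swap_apply_right x y
    simp only [Fmap, h1, h2, if_neg (asymm hxy)]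
    simp only [invSet, Finset.mem_filter, Finset.mem_univ, true_and]
    simp only [Perm.mul_apply, Equiv.swap_apply_left, Equiv.swap_apply_right]
    exact ⟨hxy, hc⟩
  · simp only [invSet, Finset.mem_filter, Finset.mem_univ, true_and] at hp
    obtain ⟨hp1, hp2⟩ := hp
    by_cases hσ : Equiv.swap x y p.1 < Equiv.swap x y p.2
    · simp only [Fmap, if_pos hσ, invSet, Finset.mem_filter, Finset.mem_univ, true_and]
      simp only [Perm.mul_apply, Equiv.swap_apply_self]
      exact ⟨hσ, hp2⟩
    · simp only [Fmap, if_neg hσ, invSet, Finset.mem_filter, Finset.mem_univ, true_and]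
      simp only [Perm.mul_apply]
      refine ⟨hp1, ?_⟩
      by_cases e1x : p.1 = x <;> by_cases e2y : p.2 = y
      · rw [e1x, e2y] at hp2; exact absurd hc (asymm hp2)
      · -- p.1 = x, p.2 ≠ y, p.2 ≠ x
        have e2x : p.2 ≠ x := by rw [e1x] at hp1; exact ne_of_gt hp1
        rw [e1x, Equiv.swap_apply_left, Equiv.swap_apply_of_ne_of_ne e2x e2y]
        rw [e1x] at hp2
        exact hp2.trans hc
      · -- p.2 = y
        by_cases e1y : p.1 = y
        · rw [e1y, e2y] at hp1; exact absurd hp1 (lt_irrefl _)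
        · rw [e2y, Equiv.swap_apply_right, Equiv.swap_apply_of_ne_of_ne e1x e1y]
          rw [e2y] at hp2
          exact hc.trans hp2
      · -- p.1 ≠ x, p.2 ≠ y : show the remaining cases are impossible via hσ
        exfalso
        by_cases e1y : p.1 = y
        · have e2x : p.2 ≠ x := fun h => by rw [e1y, h] at hp1; exact absurd (hxy.trans hp1) (lt_irrefl _)
          apply hσ
          rw [e1y, Equiv.swap_apply_right, Equiv.swap_apply_of_ne_of_ne e2x e2y]
          rw [e1y] at hp1
          exact hxy.trans hp1
        · by_cases e2x : p.2 = x
          · apply hσ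
            rw [e2x, Equiv.swap_apply_left, Equiv.swap_apply_of_ne_of_ne e1x e1y]
            rw [e2x] at hp1
            exact hp1.trans hxy
          · apply hσ
            rw [Equiv.swap_apply_of_ne_of_ne e1x e1y, Equiv.swap_apply_of_ne_of_ne e2x e2y]
            exact hp1

lemma Fmap_mem_of_mem' (c : Perm (Fin n)) (x y : Fin n) (hxy : x < y) (hc : c x < c y)
    (hnm : ∀ z : Fin n, x < z → z < y → ¬(c x < c z ∧ c z < c y)) :
    ∀ p ∈ invSet (c * Equiv.swap x y), Fmap x y p ∈ insert (x, y) (invSet c) := by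
  intro p hp
  have hinj : Function.Injective c := c.injective
  simp only [invSet, Finset.mem_filter, Finset.mem_univ, true_and] at hp
  simp only [Perm.mul_apply] at hp
  obtain ⟨hp1, hp2⟩ := hp
  by_cases hσ : Equiv.swap x y p.1 < Equiv.swap x y p.2
  · simp only [Fmap, if_pos hσ]
    apply Finset.mem_insert_of_mem
    simp only [invSet, Finset.mem_filter, Finset.mem_univ, true_and]
    exact ⟨hσ, hp2⟩
  · simp only [Fmap, if_neg hσ]
    by_cases e1x : p.1 = x <;> by_cases e2y : p.2 = y
    · exact Finset.mem_insert.mpr (Or.inl (Prod.ext e1x e2y))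
    · -- p.1 = x, p.2 = z with x < z < y ; use no-middle
      have e2x : p.2 ≠ x := by rw [e1x] at hp1; exact ne_of_gt hp1
      rw [e1x, Equiv.swap_apply_left, Equiv.swap_apply_of_ne_of_ne e2x e2y] at hp2 hσ
      have hz2 : p.2 < y := lt_of_le_of_ne (not_lt.mp hσ) e2y
      have hz1 : x < p.2 := e1x ▸ hp1
      have hcz : c p.2 < c y := hp2
      have : ¬ (c x < c p.2) := fun h => hnm p.2 hz1 hz2 ⟨h, hcz⟩
      have hne : c p.2 ≠ c x := fun h => e2x (hinj h)
      apply Finset.mem_insert_of_mem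
      simp only [invSet, Finset.mem_filter, Finset.mem_univ, true_and]
      exact ⟨e1x ▸ hp1, e1x ▸ lt_of_le_of_ne (not_lt.mp this) hne⟩
    · -- p.2 = y, p.1 = z with x < z < y
      by_cases e1y : p.1 = y
      · rw [e1y, e2y] at hp1; exact absurd hp1 (lt_irrefl _)
      rw [e2y, Equiv.swap_apply_right, Equiv.swap_apply_of_ne_of_ne e1x e1y] at hp2 hσ
      have hz1 : x < p.1 := lt_of_le_of_ne (not_lt.mp hσ) (Ne.symm e1x)
      have hz2 : p.1 < y := e2y ▸ hp1
      have : ¬ (c p.1 < c y) := fun h => hnm p.1 hz1 hz2 ⟨hp2, h⟩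
      have hne : c y ≠ c p.1 := fun h => e1y (hinj h).symm
      apply Finset.mem_insert_of_mem
      simp only [invSet, Finset.mem_filter, Finset.mem_univ, true_and]
      exact ⟨e2y ▸ hp1, e2y ▸ lt_of_le_of_ne (not_lt.mp this) hne⟩
    · exfalso
      by_cases e1y : p.1 = y
      · have e2x : p.2 ≠ x := fun h => by rw [e1y, h] at hp1; exact absurd (hxy.trans hp1) (lt_irrefl _)
        apply hσ
        rw [e1y, Equiv.swap_apply_right, Equiv.swap_apply_of_ne_of_ne e2x e2y]
        rw [e1y] at hp1
        exact hxy.trans hp1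
      · by_cases e2x : p.2 = x
        · apply hσ
          rw [e2x, Equiv.swap_apply_left, Equiv.swap_apply_of_ne_of_ne e1x e1y]
          rw [e2x] at hp1
          exact hp1.trans hxy
        · apply hσ
          rw [Equiv.swap_apply_of_ne_of_ne e1x e1y, Equiv.swap_apply_of_ne_of_ne e2x e2y]
          exact hp1

lemma xy_not_mem_invSet (c : Perm (Fin n)) (x y : Fin n) (hc : c x < c y) :
    (x, y) ∉ invSet c := by
  simp only [invSet, Finset.mem_filter, Finset.mem_univ, true_and]
  rintro ⟨-, h⟩
  exact absurd hc (asymm h)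

lemma len_lt_of_swap (c : Perm (Fin n)) (x y : Fin n) (hxy : x < y) (hc : c x < c y) :
    len c + 1 ≤ len (c * Equiv.swap x y) := by
  have h1 : (insert (x, y) (invSet c)).card ≤ (invSet (c * Equiv.swap x y)).card := by
    apply Finset.card_le_card_of_injOn (Fmap x y) (Fmap_mem_of_mem c x y hxy hc)
    apply (Fmap_injOn x y).mono
    intro p hp
    rcases Finset.mem_insert.mp hp with rfl | hp
    · exact hxy
    · simp only [invSet, Finset.mem_filter] at hp
      exact hp.2.1
  rw [len_eq, len_eq]
  rwa [Finset.card_insert_of_notMem (xy_not_mem_invSet c x y hc)] at h1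

lemma len_swap_eq (c : Perm (Fin n)) (x y : Fin n) (hxy : x < y) (hc : c x < c y)
    (hnm : ∀ z : Fin n, x < z → z < y → ¬(c x < c z ∧ c z < c y)) :
    len (c * Equiv.swap x y) = len c + 1 := by
  refine le_antisymm ?_ (len_lt_of_swap c x y hxy hc)
  have h1 : (invSet (c * Equiv.swap x y)).card ≤ (insert (x, y) (invSet c)).card := by
    apply Finset.card_le_card_of_injOn (Fmap x y) (Fmap_mem_of_mem' c x y hxy hc hnm)
    apply (Fmap_injOn x y).mono
    intro p hp
    simp only [Finset.mem_coe, invSet, Finset.mem_filter] at hp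
    exact hp.2.1
  rw [len_eq, len_eq]
  rwa [Finset.card_insert_of_notMem (xy_not_mem_invSet c x y hc)] at h1


lemma cover_Rk_le_aux (a : Perm (Fin n)) (x y : Fin n) (hlt : x < y)
    (hlen : len (a * Equiv.swap x y) = len a + 1) :
    ∀ i k, Rk a i k ≤ Rk (a * Equiv.swap x y) i k := by
  have hxy : x ≠ y := ne_of_lt hlt
  have hax : a x < a y := by
    by_contra hcon
    have hne : a x ≠ a y := fun h => hxy (a.injective h)
    have hyx : a y < a x := lt_of_le_of_ne (not_lt.mp hcon) hne.symm
    set b := a * Equiv.swap x y with hb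
    have hbx : b x < b y := by
      simp only [hb, Perm.mul_apply, Equiv.swap_apply_left, Equiv.swap_apply_right]
      exact hyx
    have := len_lt_of_swap b x y hlt hbx
    rw [swap_sq] at this
    omega
  intro i k
  by_cases h1 : (y : ℕ) < i
  · rw [Rk_swap_out a x y hxy i k (Or.inl ⟨lt_trans (show (x:ℕ) < (y:ℕ) from hlt) h1, h1⟩)]
  · by_cases h2 : (x : ℕ) < i
    · rw [Rk_swap_mid a x y hxy i k h2 (not_lt.mp h1)]
      have : (if k ≤ (a x : ℕ) then 1 else 0) ≤ (if k ≤ (a y : ℕ) then 1 else 0) := by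
        have : (a x : ℕ) ≤ (a y : ℕ) := le_of_lt hax
        split <;> split <;> omega
      omega
    · rw [Rk_swap_out a x y hxy i k (Or.inr ⟨not_lt.mp h2, not_lt.mp h1⟩)]

lemma cover_Rk_le (a b : Perm (Fin n))
    (hstep : (∃ x y : Fin n, x ≠ y ∧ b = a * Equiv.swap x y) ∧ len b = len a + 1) :
    ∀ i k, Rk a i k ≤ Rk b i k := by
  obtain ⟨⟨x, y, hxy, rfl⟩, hlen⟩ := hstep
  rcases lt_or_gt_of_ne hxy with hlt | hgt
  · exact cover_Rk_le_aux a x y hlt hlen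
  · rw [Equiv.swap_comm] at hlen ⊢
    exact cover_Rk_le_aux a y x hgt hlen

lemma Rk_succ (v : Perm (Fin n)) (i : ℕ) (hi : i < n) (k : ℕ) :
    Rk v (i + 1) k = Rk v i k + (if k ≤ (v ⟨i, hi⟩ : ℕ) then 1 else 0) := by
  classical
  by_cases hk : k ≤ (v ⟨i, hi⟩ : ℕ)
  · rw [if_pos hk]
    have hset : (Finset.univ.filter fun m : Fin n => (m : ℕ) < i + 1 ∧ k ≤ (v m : ℕ))
        = insert ⟨i, hi⟩ (Finset.univ.filter fun m : Fin n => (m : ℕ) < i ∧ k ≤ (v m : ℕ)) := by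
      ext m
      simp only [Finset.mem_filter, Finset.mem_univ, true_and, Finset.mem_insert]
      constructor
      · rintro ⟨h1, h2⟩
        by_cases hm : (m : ℕ) = i
        · exact Or.inl (Fin.ext (show (m : ℕ) = ((⟨i, hi⟩ : Fin n) : ℕ) from hm))
        · exact Or.inr ⟨by omega, h2⟩
      · rintro (rfl | ⟨h1, h2⟩)
        · exact ⟨Nat.lt_succ_self i, hk⟩
        · exact ⟨by omega, h2⟩
    rw [Rk, Rk, hset, Finset.card_insert_of_notMem (by
      intro hmem
      exact absurd (Finset.mem_filter.mp hmem).2.1 (lt_irrefl i))]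
  · rw [if_neg hk]
    have hset : (Finset.univ.filter fun m : Fin n => (m : ℕ) < i + 1 ∧ k ≤ (v m : ℕ))
        = Finset.univ.filter fun m : Fin n => (m : ℕ) < i ∧ k ≤ (v m : ℕ) := by
      ext m
      simp only [Finset.mem_filter, Finset.mem_univ, true_and]
      constructor
      · rintro ⟨h1, h2⟩
        refine ⟨?_, h2⟩
        by_cases hm : (m : ℕ) = i
        · have hmeq : m = (⟨i, hi⟩ : Fin n) :=
            Fin.ext (show (m : ℕ) = ((⟨i, hi⟩ : Fin n) : ℕ) from hm)
          rw [hmeq] at h2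
          exact absurd h2 hk
        · omega
      · rintro ⟨h1, h2⟩
        exact ⟨by omega, h2⟩
    rw [Rk, Rk, hset, Nat.add_zero]

lemma Rk_prefix_eq (v w : Perm (Fin n)) (i : ℕ)
    (hpre : ∀ m : Fin n, (m : ℕ) < i → v m = w m) (k : ℕ) : Rk v i k = Rk w i k := by
  rw [Rk, Rk]
  congr 1
  apply Finset.filter_congr
  intro m _
  constructor
  · rintro ⟨h1, h2⟩; exact ⟨h1, (hpre m h1) ▸ h2⟩
  · rintro ⟨h1, h2⟩; exact ⟨h1, (hpre m h1) ▸ h2⟩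

def Tk (c : Perm (Fin n)) (i0 i k : ℕ) : ℕ :=
  (Finset.univ.filter fun m : Fin n => i0 ≤ (m : ℕ) ∧ (m : ℕ) < i ∧ k ≤ (c m : ℕ)).card

lemma Rk_split_T (c : Perm (Fin n)) (i0 i k : ℕ) (h : i0 ≤ i) :
    Rk c i k = Rk c i0 k + Tk c i0 i k := by
  classical
  rw [Rk, Rk, Tk, ← Finset.card_union_of_disjoint]
  · congr 1
    ext m
    simp only [Finset.mem_filter, Finset.mem_univ, true_and, Finset.mem_union]
    constructor
    · rintro ⟨h1, h2⟩
      by_cases hm : (m : ℕ) < i0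
      · exact Or.inl ⟨hm, h2⟩
      · exact Or.inr ⟨by omega, h1, h2⟩
    · rintro (⟨h1, h2⟩ | ⟨h1, h2, h3⟩)
      · exact ⟨by omega, h2⟩
      · exact ⟨h2, h3⟩
  · rw [Finset.disjoint_left]
    intro m hm1 hm2
    simp only [Finset.mem_filter] at hm1 hm2
    omega

lemma exists_step (v w : Perm (Fin n)) (hRd : ∀ i k, Rk v i k ≤ Rk w i k) (hne : v ≠ w) :
    ∃ v' : Perm (Fin n),
      ((∃ x y : Fin n, x ≠ y ∧ v' = v * Equiv.swap x y) ∧ len v' = len v + 1) ∧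
      (∀ i k, Rk v i k ≤ Rk v' i k) ∧ (∀ i k, Rk v' i k ≤ Rk w i k) ∧
      (∃ i k, i ≤ n ∧ k ≤ n ∧ Rk v i k < Rk v' i k) := by
  classical
  -- first differing position
  have hDne : (Finset.univ.filter fun m : Fin n => v m ≠ w m).Nonempty := by
    by_contra hcon
    rw [Finset.not_nonempty_iff_eq_empty] at hcon
    apply hne
    ext m
    by_contra hm
    have : m ∈ Finset.univ.filter fun m : Fin n => v m ≠ w m := by
      simp only [Finset.mem_filter, Finset.mem_univ, true_and]
      exact fun h => hm (congrArg Fin.val h)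
    rw [hcon] at this
    exact absurd this (Finset.notMem_empty m)
  set i0 := (Finset.univ.filter fun m : Fin n => v m ≠ w m).min' hDne with hi0def
  have hi0mem := (Finset.univ.filter fun m : Fin n => v m ≠ w m).min'_mem hDne
  have hvwi0 : v i0 ≠ w i0 := (Finset.mem_filter.mp hi0mem).2
  have hpre : ∀ m : Fin n, (m : ℕ) < (i0 : ℕ) → v m = w m := by
    intro m hm
    by_contra hcon
    have : i0 ≤ m := Finset.min'_le _ m (by simp [hcon])
    exact absurd hm (by omega)
  -- v i0 < w i0
  have hvi : (v i0 : ℕ) < (w i0 : ℕ) := by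
    have hR0 : ∀ k, Rk v (i0 : ℕ) k = Rk w (i0 : ℕ) k := Rk_prefix_eq v w _ hpre
    have hsv := Rk_succ v (i0 : ℕ) i0.isLt (v i0 : ℕ)
    have hsw := Rk_succ w (i0 : ℕ) i0.isLt (v i0 : ℕ)
    rw [Fin.eta] at hsv hsw
    have := hRd ((i0 : ℕ) + 1) (v i0 : ℕ)
    rw [hsv, hsw, if_pos le_rfl, hR0] at this
    have hle : (v i0 : ℕ) ≤ (w i0 : ℕ) := by
      by_cases h : (v i0 : ℕ) ≤ (w i0 : ℕ)
      · exact h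
      · rw [if_neg h] at this; omega
    have hne2 : (v i0 : ℕ) ≠ (w i0 : ℕ) := fun h => hvwi0 (Fin.val_injective h)
    omega
  -- candidate set and its minimum j0
  have hJne : (Finset.univ.filter fun m : Fin n =>
      i0 < m ∧ v i0 < v m ∧ v m ≤ w i0).Nonempty := by
    refine ⟨v.symm (w i0), ?_⟩
    simp only [Finset.mem_filter, Finset.mem_univ, true_and]
    have hval : v (v.symm (w i0)) = w i0 := v.apply_symm_apply _
    have hne3 : v.symm (w i0) ≠ i0 := by
      intro h
      rw [h] at hval
      exact hvwi0 hval
    have hnlt : ¬ (v.symm (w i0) : ℕ) < (i0 : ℕ) := by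
      intro h
      have := hpre _ h
      rw [hval] at this
      exact hne3 (w.injective this.symm)
    refine ⟨?_, ?_, ?_⟩
    · have : (i0 : ℕ) ≠ (v.symm (w i0) : ℕ) := fun h => hne3 (Fin.val_injective h.symm)
      exact Fin.lt_def.mpr (by omega)
    · rw [hval]; exact Fin.lt_def.mpr hvi
    · rw [hval]
  set j0 := (Finset.univ.filter fun m : Fin n =>
      i0 < m ∧ v i0 < v m ∧ v m ≤ w i0).min' hJne with hj0def
  have hj0mem := Finset.mem_filter.mp ((Finset.univ.filter fun m : Fin n =>
      i0 < m ∧ v i0 < v m ∧ v m ≤ w i0).min'_mem hJne)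
  have hij := hj0mem.2.1
  have hv1 := hj0mem.2.2.1
  have hv2 := hj0mem.2.2.2
  have hmin : ∀ m : Fin n, i0 < m → v i0 < v m → v m ≤ w i0 → j0 ≤ m := by
    intro m h1 h2 h3
    exact Finset.min'_le _ m (by simp only [Finset.mem_filter, Finset.mem_univ, true_and]; exact ⟨h1, h2, h3⟩)
  have hnm : ∀ z : Fin n, i0 < z → z < j0 → ¬(v i0 < v z ∧ v z < v j0) := by
    rintro z hz1 hz2 ⟨hc1, hc2⟩
    have : v z ≤ w i0 := le_of_lt (lt_of_lt_of_le hc2 hv2)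
    exact absurd hz2 (not_lt.mpr (hmin z hz1 hc1 this))
  have hlen : len (v * Equiv.swap i0 j0) = len v + 1 := len_swap_eq v i0 j0 hij hv1 hnm
  refine ⟨v * Equiv.swap i0 j0, ⟨⟨i0, j0, ne_of_lt hij, rfl⟩, hlen⟩,
    cover_Rk_le_aux v i0 j0 hij hlen, ?_, ?_⟩
  · -- Rk v' ≤ Rk w
    intro i k
    have hijne : i0 ≠ j0 := ne_of_lt hij
    by_cases h1 : (j0 : ℕ) < i
    · rw [Rk_swap_out v i0 j0 hijne i k
        (Or.inl ⟨lt_trans (show (i0:ℕ) < (j0:ℕ) from hij) h1, h1⟩)]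
      exact hRd i k
    · by_cases h2 : (i0 : ℕ) < i
      · rw [Rk_swap_mid v i0 j0 hijne i k h2 (not_lt.mp h1)]
        by_cases hk1 : k ≤ (v i0 : ℕ)
        · have hk2 : k ≤ (v j0 : ℕ) := le_of_lt (lt_of_le_of_lt hk1 hv1)
          rw [if_pos hk1, if_pos hk2]
          have := hRd i k
          omega
        · by_cases hk2 : k ≤ (v j0 : ℕ)
          · -- middle case : strict inequality needed
            rw [if_pos hk2, if_neg hk1]
            have hstrict : Rk v i k + 1 ≤ Rk w i k := by
              set κ := (w i0 : ℕ) + 1 with hκ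
              have hsplitvk := Rk_split_T v (i0 : ℕ) i k (le_of_lt h2)
              have hsplitvκ := Rk_split_T v (i0 : ℕ) i κ (le_of_lt h2)
              have hsplitwk := Rk_split_T w (i0 : ℕ) i k (le_of_lt h2)
              have hsplitwκ := Rk_split_T w (i0 : ℕ) i κ (le_of_lt h2)
              have hprevk := Rk_prefix_eq v w (i0 : ℕ) hpre k
              have hpreκ := Rk_prefix_eq v w (i0 : ℕ) hpre κ
              -- T v k = T v κ
              have hT1 : Tk v (i0 : ℕ) i k = Tk v (i0 : ℕ) i κ := by
                rw [Tk, Tk]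
                congr 1
                apply Finset.filter_congr
                intro m _
                constructor
                · rintro ⟨hm1, hm2, hm3⟩
                  refine ⟨hm1, hm2, ?_⟩
                  -- v m ≥ k > v i0, m ≠ i0, m < j0 hence v m > w i0
                  have hmne : m ≠ i0 := by
                    intro h; rw [h] at hm3; exact hk1 hm3
                  have hmi0 : i0 < m := Fin.lt_def.mpr
                    (lt_of_le_of_ne hm1 fun h => hmne (Fin.val_injective h.symm))
                  have hvi0m : v i0 < v m := Fin.lt_def.mpr (by omega)
                  by_cases hle : v m ≤ w i0
                  · have := hmin m hmi0 hvi0m hle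
                    have hmlt : (m : ℕ) < (j0 : ℕ) := by
                      have := not_lt.mp h1; omega
                    exact absurd hmlt (by
                      have : (j0 : ℕ) ≤ (m : ℕ) := this
                      omega)
                  · have : (w i0 : ℕ) < (v m : ℕ) := Fin.lt_def.mp (not_le.mp hle)
                    omega
                · rintro ⟨hm1, hm2, hm3⟩
                  refine ⟨hm1, hm2, ?_⟩
                  have : (v j0 : ℕ) ≤ (w i0 : ℕ) := Fin.le_def.mp hv2
                  omega
              -- T v κ ≤ T w κ
              have hT2 : Tk v (i0 : ℕ) i κ ≤ Tk w (i0 : ℕ) i κ := by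
                have := hRd i κ
                omega
              -- T w κ + 1 ≤ T w k
              have hT3 : Tk w (i0 : ℕ) i κ + 1 ≤ Tk w (i0 : ℕ) i k := by
                rw [Tk, Tk]
                have hsub : insert i0 (Finset.univ.filter fun m : Fin n =>
                    (i0 : ℕ) ≤ (m : ℕ) ∧ (m : ℕ) < i ∧ κ ≤ (w m : ℕ))
                    ⊆ Finset.univ.filter fun m : Fin n =>
                    (i0 : ℕ) ≤ (m : ℕ) ∧ (m : ℕ) < i ∧ k ≤ (w m : ℕ) := by
                  intro m hm
                  rcases Finset.mem_insert.mp hm with rfl | hm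
                  · simp only [Finset.mem_filter, Finset.mem_univ, true_and]
                    refine ⟨le_rfl, h2, ?_⟩
                    have : (v j0 : ℕ) ≤ (w i0 : ℕ) := Fin.le_def.mp hv2
                    omega
                  · simp only [Finset.mem_filter, Finset.mem_univ, true_and] at hm ⊢
                    refine ⟨hm.1, hm.2.1, ?_⟩
                    have h3 := hm.2.2
                    have : (v j0 : ℕ) ≤ (w i0 : ℕ) := Fin.le_def.mp hv2
                    omega
                have hnotmem : i0 ∉ Finset.univ.filter fun m : Fin n =>
                    (i0 : ℕ) ≤ (m : ℕ) ∧ (m : ℕ) < i ∧ κ ≤ (w m : ℕ) := by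
                  simp only [Finset.mem_filter, Finset.mem_univ, true_and]
                  rintro ⟨-, -, h⟩
                  omega
                have := Finset.card_le_card hsub
                rw [Finset.card_insert_of_notMem hnotmem] at this
                exact this
              omega
            omega
          · rw [if_neg hk1, if_neg hk2]
            have := hRd i k
            omega
      · rw [Rk_swap_out v i0 j0 hijne i k (Or.inr ⟨not_lt.mp h2, not_lt.mp h1⟩)]
        exact hRd i k
  · -- strict increase at (i0+1, v j0)
    refine ⟨(i0 : ℕ) + 1, (v j0 : ℕ), i0.isLt, le_of_lt (v j0).isLt, ?_⟩
    have h2 : (i0 : ℕ) < (i0 : ℕ) + 1 := Nat.lt_succ_self _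
    have h1 : (i0 : ℕ) + 1 ≤ (j0 : ℕ) := Fin.lt_def.mp hij
    rw [Rk_swap_mid v i0 j0 (ne_of_lt hij) ((i0 : ℕ) + 1) (v j0 : ℕ) h2 h1]
    rw [if_pos le_rfl, if_neg (not_le.mpr (Fin.lt_def.mp hv1))]
    have hmono := cover_Rk_le_aux v i0 j0 hij hlen ((i0 : ℕ) + 1) (v j0 : ℕ)
    rw [Rk_swap_mid v i0 j0 (ne_of_lt hij) ((i0 : ℕ) + 1) (v j0 : ℕ) h2 h1,
      if_pos le_rfl, if_neg (not_le.mpr (Fin.lt_def.mp hv1))] at hmono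
    omega

lemma Rk_stable (v : Perm (Fin n)) (i k : ℕ) (hi : n ≤ i) : Rk v i k = Rk v n k := by
  rw [Rk, Rk]
  congr 1
  apply Finset.filter_congr
  intro m _
  have := m.isLt
  constructor
  · rintro ⟨-, h2⟩; exact ⟨this, h2⟩
  · rintro ⟨-, h2⟩; exact ⟨by omega, h2⟩

/-- the defect measure -/
def Mdef (v w : Perm (Fin n)) : ℕ :=
  ∑ p ∈ (Finset.range (n+1)) ×ˢ (Finset.range (n+1)), (Rk w p.1 p.2 - Rk v p.1 p.2)

lemma bruhat_aux (w : Perm (Fin n)) : ∀ N : ℕ, ∀ v : Perm (Fin n), Mdef v w ≤ N →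
    (∀ i k, Rk v i k ≤ Rk w i k) →
    Relation.ReflTransGen
      (fun a b => (∃ x y : Fin n, x ≠ y ∧ b = a * Equiv.swap x y) ∧ len b = len a + 1) v w := by
  intro N
  induction N with
  | zero =>
    intro v hM hRd
    by_cases hvw : v = w
    · exact hvw ▸ Relation.ReflTransGen.refl
    · exfalso
      obtain ⟨v', -, -, hle2, i, k, hi, hk, hstrict⟩ := exists_step v w hRd hvw
      have hterm : 1 ≤ Rk w i k - Rk v i k := by
        have := hle2 i k
        omega
      have hmem : (i, k) ∈ (Finset.range (n+1)) ×ˢ (Finset.range (n+1)) := by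
        simp only [Finset.mem_product, Finset.mem_range]
        omega
      have hsum : Rk w (i,k).1 (i,k).2 - Rk v (i,k).1 (i,k).2
          ≤ ∑ p ∈ (Finset.range (n+1)) ×ˢ (Finset.range (n+1)), (Rk w p.1 p.2 - Rk v p.1 p.2) :=
        Finset.single_le_sum (f := fun p => Rk w p.1 p.2 - Rk v p.1 p.2)
          (fun p _ => Nat.zero_le _) hmem
      have : 1 ≤ Mdef v w := le_trans hterm hsum
      omega
  | succ N ih =>
    intro v hM hRd
    by_cases hvw : v = w
    · exact hvw ▸ Relation.ReflTransGen.refl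
    · obtain ⟨v', hstep, hle1, hle2, i, k, hi, hk, hstrict⟩ := exists_step v w hRd hvw
      have hmem : (i, k) ∈ (Finset.range (n+1)) ×ˢ (Finset.range (n+1)) := by
        simp only [Finset.mem_product, Finset.mem_range]
        omega
      have hMlt : Mdef v' w < Mdef v w := by
        apply Finset.sum_lt_sum
        · intro p _
          have h1 := hle1 p.1 p.2
          have h2 := hle2 p.1 p.2
          omega
        · refine ⟨(i, k), hmem, ?_⟩
          have h2 := hle2 i k
          simp only
          omega
      exact Relation.ReflTransGen.head hstep (ih v' (by omega) hle2)

lemma dir1 (v w : Perm (Fin n))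
    (h : Relation.ReflTransGen
      (fun a b => (∃ x y : Fin n, x ≠ y ∧ b = a * Equiv.swap x y) ∧ len b = len a + 1) v w) :
    ∀ i k, Rk v i k ≤ Rk w i k := by
  induction h with
  | refl => exact fun i k => le_rfl
  | tail hab hstep ih =>
    intro i k
    exact le_trans (ih i k) (cover_Rk_le _ _ hstep i k)


lemma countP_mono_of_getD (a b : List ℕ) (hlen : a.length = b.length)
    (h : ∀ j, a.getD j 0 ≤ b.getD j 0) (k : ℕ) :
    a.countP (fun t => k ≤ t) ≤ b.countP (fun t => k ≤ t) := by
  induction a generalizing b with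
  | nil => simp
  | cons x a' ih =>
    rcases b with - | ⟨y, b'⟩
    · simp at hlen
    · have hxy : x ≤ y := by have := h 0; simpa using this
      have htail : ∀ j, a'.getD j 0 ≤ b'.getD j 0 := fun j => by
        have := h (j + 1); simpa using this
      have hlen' : a'.length = b'.length := by simpa using hlen
      simp only [List.countP_cons]
      have := ih b' hlen' htail
      by_cases hkx : k ≤ x
      · have hky : k ≤ y := hkx.trans hxy
        simp [hkx, hky]
        omega
      · simp only [decide_eq_true_eq]
        split <;> omega

lemma getD_mono_of_countP (a b : List ℕ) (ha : a.Pairwise (· < ·)) (hb : b.Pairwise (· < ·))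
    (hlen : a.length = b.length)
    (h : ∀ k, a.countP (fun t => k ≤ t) ≤ b.countP (fun t => k ≤ t)) :
    ∀ j, a.getD j 0 ≤ b.getD j 0 := by
  intro j
  by_cases hj : j < a.length
  · by_contra hcon
    push_neg at hcon
    have hjb : j < b.length := hlen ▸ hj
    set k := b.get ⟨j, hjb⟩ + 1 with hk
    have hgdA : a.getD j 0 = a.get ⟨j, hj⟩ := List.getD_eq_get a 0 ⟨j, hj⟩
    have hgdB : b.getD j 0 = b.get ⟨j, hjb⟩ := List.getD_eq_get b 0 ⟨j, hjb⟩
    -- countP k a ≥ a.length - j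
    have hA : a.length - j ≤ a.countP (fun t => k ≤ t) := by
      have hsplit : a.countP (fun t => k ≤ t) =
          (a.take j).countP (fun t => k ≤ t) + (a.drop j).countP (fun t => k ≤ t) := by
        rw [← List.countP_append, List.take_append_drop]
      have hdrop : (a.drop j).countP (fun t => k ≤ t) = (a.drop j).length := by
        apply List.countP_eq_length.mpr
        intro x hx
        obtain ⟨m, hmlt, hm⟩ := List.mem_iff_getElem.mp hx
        have hjm : j + m < a.length := by
          have := hmlt; rw [List.length_drop] at this; omega
        have hxval : x = a[j + m] := by rw [← hm, List.getElem_drop]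
        have hmono := ha.sortedLT.strictMono_get.monotone
          (show (⟨j, hj⟩ : Fin a.length) ≤ ⟨j + m, hjm⟩ from Fin.mk_le_mk.mpr (by omega))
        simp only [List.get_eq_getElem] at hmono
        simp only [decide_eq_true_eq]
        rw [hxval]
        calc k = b.get ⟨j, hjb⟩ + 1 := rfl
          _ ≤ a.get ⟨j, hj⟩ := by rw [← hgdA, ← hgdB]; omega
          _ = a[j] := List.get_eq_getElem (l := a)
          _ ≤ _ := hmono
      rw [hsplit, hdrop, List.length_drop]
      omega
    -- countP k b ≤ b.length - (j+1)
    have hB : b.countP (fun t => k ≤ t) ≤ b.length - (j + 1) := by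
      have hsplit : b.countP (fun t => k ≤ t) =
          (b.take (j+1)).countP (fun t => k ≤ t) + (b.drop (j+1)).countP (fun t => k ≤ t) := by
        rw [← List.countP_append, List.take_append_drop]
      have htake : (b.take (j+1)).countP (fun t => k ≤ t) = 0 := by
        apply List.countP_eq_zero.mpr
        intro x hx
        obtain ⟨m, hmlt, hm⟩ := List.mem_iff_getElem.mp hx
        have hm2 : m < j + 1 := lt_of_lt_of_le hmlt (by rw [List.length_take]; omega)
        have hmb : m < b.length := by
          have := hmlt; rw [List.length_take] at this; omega
        have hxval : x = b[m] := by rw [← hm, List.getElem_take]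
        have hmono := hb.sortedLT.strictMono_get.monotone
          (show (⟨m, hmb⟩ : Fin b.length) ≤ ⟨j, hjb⟩ from Fin.mk_le_mk.mpr (by omega))
        simp only [List.get_eq_getElem] at hmono
        simp only [decide_eq_true_eq]
        rw [hxval]
        have hgj : b.get ⟨j, hjb⟩ = b[j] := List.get_eq_getElem (l := b)
        omega
      calc b.countP (fun t => k ≤ t) = (b.drop (j+1)).countP (fun t => k ≤ t) := by
            rw [hsplit, htake]; ring
        _ ≤ (b.drop (j+1)).length := List.countP_le_length
        _ = b.length - (j+1) := List.length_drop
    have := h k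
    omega
  · rw [List.getD_eq_default a 0 (by omega)]
    exact Nat.zero_le _





lemma card_posLt (i : ℕ) (hi : i ≤ n) :
    (Finset.univ.filter fun m : Fin n => (m : ℕ) < i).card = i := by
  have himg : (Finset.univ.filter fun m : Fin n => (m : ℕ) < i).image Fin.val
      = Finset.range i := by
    ext t
    simp only [Finset.mem_image, Finset.mem_filter, Finset.mem_univ, true_and, Finset.mem_range]
    constructor
    · rintro ⟨m, hm, rfl⟩; exact hm
    · intro ht; exact ⟨⟨t, lt_of_lt_of_le ht hi⟩, ht, rfl⟩
  have := Finset.card_image_of_injective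
    (Finset.univ.filter fun m : Fin n => (m : ℕ) < i) Fin.val_injective
  rw [himg, Finset.card_range] at this
  omega

lemma prefSet_card (v : Perm (Fin n)) (i : ℕ) (hi : i ≤ n) : (prefSet v i).card = i := by
  rw [prefSet, Finset.card_image_of_injective _ v.injective, card_posLt i hi]

lemma Rk_eq_filter_card (v : Perm (Fin n)) (i k : ℕ) :
    ((prefSet v i).filter fun u : Fin n => k ≤ (u : ℕ)).card = Rk v i k := by
  classical
  rw [prefSet, Rk]
  rw [Finset.filter_image]
  rw [Finset.card_image_of_injective _ v.injective, Finset.filter_filter]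

lemma countP_sort (s : Finset (Fin n)) (p : Fin n → Prop) [DecidablePred p] :
    ((s.sort (· ≤ ·)).countP fun u => decide (p u)) = (s.filter p).card := by
  classical
  rw [List.countP_eq_length_filter]
  have hnd : ((s.sort (· ≤ ·)).filter fun u => decide (p u)).Nodup :=
    (s.sort_nodup (· ≤ ·)).filter _
  rw [← List.toFinset_card_of_nodup hnd]
  congr 1
  ext u
  simp only [List.mem_toFinset, List.mem_filter, Finset.mem_sort, Finset.mem_filter,
    decide_eq_true_eq]

lemma sortedPref_sorted (v : Perm (Fin n)) (i : ℕ) :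
    (sortedPref v i).Pairwise (· < ·) := by
  rw [sortedPref]
  apply List.Pairwise.map
  · intro a b hab
    exact hab
  · exact (Finset.sortedLT_sort _).pairwise

lemma sortedPref_length (v : Perm (Fin n)) (i : ℕ) (hi : i ≤ n) :
    (sortedPref v i).length = i := by
  rw [sortedPref, List.length_map, Finset.length_sort, prefSet_card v i hi]

lemma sortedPref_countP (v : Perm (Fin n)) (i k : ℕ) :
    ((sortedPref v i).countP fun t => k ≤ t) = Rk v i k := by
  rw [sortedPref, List.countP_map]
  rw [← Rk_eq_filter_card]
  have : ((fun t => decide (k ≤ t)) ∘ Fin.val) = fun u : Fin n => decide (k ≤ (u : ℕ)) := rfl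
  rw [this, countP_sort]

end BruhatAux

theorem stmt2 (n : ℕ) (v w : Perm (Fin n)) :
    BruhatLE v w ↔
      ∀ i : ℕ, i ≤ n → ∀ j : ℕ, (sortedPref v i).getD j 0 ≤ (sortedPref w i).getD j 0 := by
  constructor
  · intro h i hi j
    have hR := dir1 v w h
    exact getD_mono_of_countP (sortedPref v i) (sortedPref w i)
      (sortedPref_sorted v i) (sortedPref_sorted w i)
      (by rw [sortedPref_length v i hi, sortedPref_length w i hi])
      (fun k => by rw [sortedPref_countP, sortedPref_countP]; exact hR i k) j
  · intro h
    have hR : ∀ i k, Rk v i k ≤ Rk w i k := by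
      intro i k
      by_cases hi : i ≤ n
      · have := countP_mono_of_getD (sortedPref v i) (sortedPref w i)
          (by rw [sortedPref_length v i hi, sortedPref_length w i hi]) (h i hi) k
        rwa [sortedPref_countP, sortedPref_countP] at this
      · rw [Rk_stable v i k (by omega), Rk_stable w i k (by omega)]
        have := countP_mono_of_getD (sortedPref v n) (sortedPref w n)
          (by rw [sortedPref_length v n le_rfl, sortedPref_length w n le_rfl]) (h n le_rfl) k
        rwa [sortedPref_countP, sortedPref_countP] at this
    exact bruhat_aux w (Mdef v w) v le_rfl hR
end

section
/- For a permutation w in S_n, the pair (e, w) (where e is the identity) is divisible if and only if w contains the pattern 321 or the pattern 3412. -/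
/-
Because `1[1,i] = [1,i]`, the defect `i - |[1,i] ∩ w[1,i]|` counts the positions `j ≤ i` with
`w(j) > i`, and equally the positions `j > i` with `w(j) ≤ i`. Two of each, `a < b ≤ i < c < d`,
give a 321 or a 3412 according to how `w(a), w(b)` and `w(c), w(d)` compare; a fixed point
`w(i) = i` with one of each, `a < i < c`, gives the 321 occurrence `a i c`. Conversely, the middle
entry `b` of a 321 occurrence is a fixed point or yields a defect of two at the cut `b` or
`w(b)`, and an occurrence `a b c d` of 3412 yields one at the cut `b` or `w(a)`.
-/

open Equiv

open Finset

lemma exists_lt_of_one_lt_card {α : Type*} [LinearOrder α] {s : Finset α} (h : 1 < #s) :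
    ∃ a ∈ s, ∃ b ∈ s, a < b :=
  ⟨_, min'_mem s _, _, max'_mem s _, min'_lt_max'_of_card s h⟩

section

variable {n : ℕ}

lemma mem_prefSet {v : Perm (Fin n)} {i : ℕ} {x : Fin n} :
    x ∈ prefSet v i ↔ ((v⁻¹ x : Fin n) : ℕ) < i := by
  simp only [prefSet, mem_image, mem_filter, mem_univ, true_and]
  exact ⟨by rintro ⟨j, hj, rfl⟩; simpa using hj, fun hx => ⟨v⁻¹ x, hx, by simp⟩⟩

lemma card_prefSet (v : Perm (Fin n)) {i : ℕ} (hi : i ≤ n) : #(prefSet v i) = i := by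
  rw [prefSet, card_image_of_injective _ v.injective, ← card_map Fin.valEmbedding]
  convert card_range i
  ext k
  simp only [mem_map, mem_filter, mem_univ, true_and, Fin.valEmbedding_apply, mem_range]
  exact ⟨by rintro ⟨j, hj, rfl⟩; exact hj, fun hk => ⟨⟨k, by omega⟩, hk, rfl⟩⟩

-- Positions and values are 0-based: `(j : ℕ) < i` says that `j` is among the first `i`.
def highBefore (w : Perm (Fin n)) (i : ℕ) : Finset (Fin n) :=
  {j | (j : ℕ) < i ∧ i ≤ (w j : ℕ)}

def lowAfter (w : Perm (Fin n)) (i : ℕ) : Finset (Fin n) :=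
  {j | i ≤ (j : ℕ) ∧ (w j : ℕ) < i}

lemma prefSet_sdiff_prefSet_one (w : Perm (Fin n)) (i : ℕ) :
    prefSet w i \ prefSet 1 i = (highBefore w i).image w := by
  ext x
  simp only [highBefore, mem_sdiff, mem_prefSet, mem_image, mem_filter, mem_univ, true_and,
    inv_one, Perm.one_apply, not_lt]
  exact ⟨fun h => ⟨w⁻¹ x, by simpa using h, by simp⟩,
    by rintro ⟨j, hj, rfl⟩; simpa using hj⟩

lemma prefSet_one_sdiff_prefSet (w : Perm (Fin n)) (i : ℕ) :
    prefSet 1 i \ prefSet w i = (lowAfter w i).image w := by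
  ext x
  simp only [lowAfter, mem_sdiff, mem_prefSet, mem_image, mem_filter, mem_univ, true_and,
    inv_one, Perm.one_apply, not_lt]
  exact ⟨fun h => ⟨w⁻¹ x, by simpa using h.symm, by simp⟩,
    by rintro ⟨j, hj, rfl⟩; simpa using hj.symm⟩

lemma card_inter_add_card_highBefore (w : Perm (Fin n)) {i : ℕ} (hi : i ≤ n) :
    #(prefSet 1 i ∩ prefSet w i) + #(highBefore w i) = i := by
  rw [← card_image_of_injective (highBefore w i) w.injective, ← prefSet_sdiff_prefSet_one,
    inter_comm, card_inter_add_card_sdiff, card_prefSet w hi]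

lemma card_inter_add_card_lowAfter (w : Perm (Fin n)) {i : ℕ} (hi : i ≤ n) :
    #(prefSet 1 i ∩ prefSet w i) + #(lowAfter w i) = i := by
  rw [← card_image_of_injective (lowAfter w i) w.injective, ← prefSet_one_sdiff_prefSet,
    card_inter_add_card_sdiff, card_prefSet 1 hi]

lemma card_lowAfter (w : Perm (Fin n)) {i : ℕ} (hi : i ≤ n) :
    #(lowAfter w i) = #(highBefore w i) := by
  have := card_inter_add_card_highBefore w hi
  have := card_inter_add_card_lowAfter w hi
  omega

lemma divisibleAfter_one_iff {w : Perm (Fin n)} {i : ℕ} (hi : i ≤ n) :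
    DivisibleAfter 1 w i ↔ 2 ≤ #(highBefore w i) := by
  have := card_inter_add_card_highBefore w hi
  rw [DivisibleAfter]
  omega

lemma divisibleAt_one_iff {w : Perm (Fin n)} (m : Fin n) :
    DivisibleAt 1 w (m + 1) ↔ w m = m ∧ (highBefore w (m + 1)).Nonempty := by
  have := card_inter_add_card_highBefore w (i := m + 1) m.isLt
  simp only [DivisibleAt, Nat.add_sub_cancel, Fin.eta, Perm.one_apply, ← card_pos]
  constructor
  · rintro ⟨-, hfix, hcard⟩
    exact ⟨hfix.symm, by omega⟩
  · rintro ⟨hfix, hpos⟩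
    exact ⟨m.isLt, hfix.symm, by omega⟩

lemma divisible_one_iff (w : Perm (Fin n)) :
    Divisible 1 w ↔ (∃ i ≤ n, 2 ≤ #(highBefore w i)) ∨
      ∃ m : Fin n, w m = m ∧ (highBefore w (m + 1)).Nonempty := by
  constructor
  · rintro ⟨i, hi1, hin, hafter | hat⟩
    · exact .inl ⟨i, hin, (divisibleAfter_one_iff hin).1 hafter⟩
    · obtain ⟨m, rfl⟩ : ∃ m : Fin n, (m : ℕ) + 1 = i :=
        ⟨⟨i - 1, by omega⟩, by simp only; omega⟩
      exact .inr ⟨m, (divisibleAt_one_iff m).1 hat⟩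
  · rintro (⟨i, hin, hcard⟩ | ⟨m, hm⟩)
    · have := card_inter_add_card_highBefore w hin
      exact ⟨i, by omega, hin, .inl ((divisibleAfter_one_iff hin).2 hcard)⟩
    · exact ⟨m + 1, by omega, m.isLt, .inr ((divisibleAt_one_iff m).2 hm)⟩

lemma containsPat_321_iff (w : Perm (Fin n)) :
    ContainsPat w pat321 ↔ ∃ a b c, a < b ∧ b < c ∧ w c < w b ∧ w b < w a := by
  constructor
  · rintro ⟨f, hf, hw⟩
    exact ⟨f (0 : Fin 3), f (1 : Fin 3), f (2 : Fin 3), hf (by decide), hf (by decide),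
      (hw (2 : Fin 3) (1 : Fin 3)).1 (by decide), (hw (1 : Fin 3) (0 : Fin 3)).1 (by decide)⟩
  · rintro ⟨a, b, c, hab, hbc, hwcb, hwba⟩
    refine ⟨![a, b, c], Fin.strictMono_iff_lt_succ.2 fun i => by fin_cases i <;> simpa, ?_⟩
    have hwca := hwcb.trans hwba
    intro i j
    fin_cases i <;> fin_cases j <;> simp [pat321, hwba, hwcb, hwca, hwba.le, hwcb.le, hwca.le]

lemma containsPat_3412_iff (w : Perm (Fin n)) :
    ContainsPat w pat3412 ↔
      ∃ a b c d, a < b ∧ b < c ∧ c < d ∧ w c < w d ∧ w d < w a ∧ w a < w b := by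
  constructor
  · rintro ⟨f, hf, hw⟩
    exact ⟨f (0 : Fin 4), f (1 : Fin 4), f (2 : Fin 4), f (3 : Fin 4), hf (by decide),
      hf (by decide), hf (by decide), (hw (2 : Fin 4) (3 : Fin 4)).1 (by decide),
      (hw (3 : Fin 4) (0 : Fin 4)).1 (by decide), (hw (0 : Fin 4) (1 : Fin 4)).1 (by decide)⟩
  · rintro ⟨a, b, c, d, hab, hbc, hcd, hwcd, hwda, hwab⟩
    refine ⟨![a, b, c, d], Fin.strictMono_iff_lt_succ.2 fun i => by fin_cases i <;> simpa, ?_⟩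
    have hwca := hwcd.trans hwda
    have hwcb := hwca.trans hwab
    have hwdb := hwda.trans hwab
    intro i j
    fin_cases i <;> fin_cases j <;>
      simp [pat3412, hwcd, hwda, hwab, hwca, hwcb, hwdb, hwcd.le, hwda.le, hwab.le, hwca.le,
        hwcb.le, hwdb.le]

lemma containsPat_321_or_3412_of_two_le_card_highBefore {w : Perm (Fin n)} {i : ℕ} (hi : i ≤ n)
    (h : 2 ≤ #(highBefore w i)) : ContainsPat w pat321 ∨ ContainsPat w pat3412 := by
  obtain ⟨a, ha, b, hb, hab⟩ := exists_lt_of_one_lt_card h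
  obtain ⟨c, hc, d, hd, hcd⟩ := exists_lt_of_one_lt_card (card_lowAfter w hi ▸ h)
  simp only [highBefore, lowAfter, mem_filter, mem_univ, true_and] at ha hb hc hd
  have hbc : b < c := by omega
  rw [containsPat_321_iff, containsPat_3412_iff]
  rcases lt_or_gt_of_ne (w.injective.ne hab.ne) with hwab | hwba
  · rcases lt_or_gt_of_ne (w.injective.ne hcd.ne) with hwcd | hwdc
    · exact .inr ⟨a, b, c, d, hab, hbc, hcd, hwcd, by omega, hwab⟩
    · exact .inl ⟨b, c, d, hbc, hcd, hwdc, by omega⟩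
  · exact .inl ⟨a, b, c, hab, hbc, by omega, hwba⟩

lemma containsPat_321_of_apply_eq_self {w : Perm (Fin n)} {m : Fin n} (hm : w m = m)
    (h : (highBefore w (m + 1)).Nonempty) : ContainsPat w pat321 := by
  obtain ⟨a, ha⟩ := h
  obtain ⟨c, hc⟩ : (lowAfter w (m + 1)).Nonempty := by
    rw [← card_pos, card_lowAfter w m.isLt, card_pos]
    exact ⟨a, ha⟩
  simp only [highBefore, lowAfter, mem_filter, mem_univ, true_and] at ha hc
  have hwm : (w m : ℕ) = m := congrArg Fin.val hm
  have ham : (a : ℕ) ≠ m := fun h => by rw [Fin.val_inj.1 h] at ha; omega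
  have hcm : (w c : ℕ) ≠ w m := Fin.val_ne_of_ne (w.injective.ne (by omega))
  rw [containsPat_321_iff]
  exact ⟨a, m, c, by omega, by omega, by omega, by omega⟩

lemma divisible_one_of_containsPat_321 {w : Perm (Fin n)} (h : ContainsPat w pat321) :
    Divisible 1 w := by
  obtain ⟨a, b, c, hab, hbc, hwcb, hwba⟩ := (containsPat_321_iff w).1 h
  rw [divisible_one_iff]
  rcases lt_trichotomy (w b : ℕ) b with hlt | heq | hgt
  · refine .inl ⟨w b + 1, (w b).isLt, ?_⟩
    rw [← card_lowAfter w (w b).isLt]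
    exact one_lt_card.2 ⟨b, by simp [lowAfter]; omega, c, by simp [lowAfter]; omega, hbc.ne⟩
  · exact .inr ⟨b, Fin.ext heq, a, by simp [highBefore]; omega⟩
  · refine .inl ⟨b + 1, b.isLt, ?_⟩
    exact one_lt_card.2 ⟨a, by simp [highBefore]; omega, b, by simp [highBefore]; omega, hab.ne⟩

lemma divisible_one_of_containsPat_3412 {w : Perm (Fin n)} (h : ContainsPat w pat3412) :
    Divisible 1 w := by
  obtain ⟨a, b, c, d, hab, hbc, hcd, hwcd, hwda, hwab⟩ := (containsPat_3412_iff w).1 h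
  rw [divisible_one_iff]
  rcases lt_or_ge (b : ℕ) (w a) with hlt | hge
  · refine .inl ⟨b + 1, b.isLt, ?_⟩
    exact one_lt_card.2 ⟨a, by simp [highBefore]; omega, b, by simp [highBefore]; omega, hab.ne⟩
  · refine .inl ⟨w a + 1, (w a).isLt, ?_⟩
    rw [← card_lowAfter w (w a).isLt]
    exact one_lt_card.2 ⟨c, by simp [lowAfter]; omega, d, by simp [lowAfter]; omega, hcd.ne⟩

end

theorem stmt4 (n : ℕ) (w : Perm (Fin n)) :
    Divisible 1 w ↔ (ContainsPat w pat321 ∨ ContainsPat w pat3412) := by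
  constructor
  · rw [divisible_one_iff]
    rintro (⟨i, hi, h⟩ | ⟨m, hm, h⟩)
    · exact containsPat_321_or_3412_of_two_le_card_highBefore hi h
    · exact .inl (containsPat_321_of_apply_eq_self hm h)
  · rintro (h | h)
    exacts [divisible_one_of_containsPat_321 h, divisible_one_of_containsPat_3412 h]
end

section
/- A pair (v, w) of permutations in S_n is divisible if and only if the permutation v⁻¹w contains the pattern 321 or the pattern 3412 (i.e., is not Boolean). -/
open Equiv

open Finset
section AuxStmt5
variable {n : ℕ}

def Acnt (u : Perm (Fin n)) (i : ℕ) : ℕ :=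
  ((univ : Finset (Fin n)).filter fun j : Fin n => (j:ℕ) < i ∧ i ≤ (u j : ℕ)).card
def Bcnt (u : Perm (Fin n)) (i : ℕ) : ℕ :=
  ((univ : Finset (Fin n)).filter fun j : Fin n => i ≤ (j:ℕ) ∧ (u j : ℕ) < i).card
def Ccnt (u : Perm (Fin n)) (i : ℕ) : ℕ :=
  ((univ : Finset (Fin n)).filter fun j : Fin n => (j:ℕ) < i ∧ (u j : ℕ) < i).card

lemma Sset_card {i : ℕ} (h : i ≤ n) :
    ((univ : Finset (Fin n)).filter fun j : Fin n => (j:ℕ) < i).card = i := by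
  have : ((univ : Finset (Fin n)).filter fun j : Fin n => (j:ℕ) < i)
      = (Finset.range i).attachFin (fun m hm => lt_of_lt_of_le (mem_range.mp hm) h) := by
    ext j; simp [Finset.mem_attachFin]
  rw [this, Finset.card_attachFin, Finset.card_range]

lemma card_u_lt (u : Perm (Fin n)) (i : ℕ) :
    ((univ : Finset (Fin n)).filter fun j : Fin n => (u j : ℕ) < i).card
      = ((univ : Finset (Fin n)).filter fun j : Fin n => (j:ℕ) < i).card := by
  have : ((univ : Finset (Fin n)).filter fun j : Fin n => (u j : ℕ) < i)
      = ((univ : Finset (Fin n)).filter fun j : Fin n => (j:ℕ) < i).map u.symm.toEmbedding := by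
    ext j
    simp only [Finset.mem_map, Finset.mem_filter, Finset.mem_univ, true_and,
      Equiv.coe_toEmbedding]
    constructor
    · intro hj; exact ⟨u j, hj, u.symm_apply_apply j⟩
    · rintro ⟨k, hk, rfl⟩; simpa using hk
  rw [this, Finset.card_map]

lemma CA_split (u : Perm (Fin n)) {i : ℕ} (h : i ≤ n) : Ccnt u i + Acnt u i = i := by
  have := Finset.card_filter_add_card_filter_not
    (s := (univ : Finset (Fin n)).filter fun j : Fin n => (j:ℕ) < i)
    (p := fun j => (u j : ℕ) < i)
  rw [Finset.filter_filter, Finset.filter_filter, Sset_card h] at this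
  unfold Ccnt Acnt
  simp only [not_lt] at this
  convert this using 2

lemma AB_eq (u : Perm (Fin n)) (i : ℕ) : Acnt u i = Bcnt u i := by
  have h1 := Finset.card_filter_add_card_filter_not
    (s := (univ : Finset (Fin n)).filter fun j : Fin n => (j:ℕ) < i)
    (p := fun j => (u j : ℕ) < i)
  have h2 := Finset.card_filter_add_card_filter_not
    (s := (univ : Finset (Fin n)).filter fun j : Fin n => (u j:ℕ) < i)
    (p := fun j => (j : ℕ) < i)
  rw [Finset.filter_filter, Finset.filter_filter] at h1 h2
  rw [card_u_lt u i] at h2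
  have e1 : ((univ : Finset (Fin n)).filter fun j : Fin n => (j:ℕ) < i ∧ ¬ (u j:ℕ) < i).card = Acnt u i := by
    unfold Acnt; congr 1; ext j; simp [not_lt]
  have e2 : ((univ : Finset (Fin n)).filter fun j : Fin n => (u j:ℕ) < i ∧ ¬ (j:ℕ) < i).card = Bcnt u i := by
    unfold Bcnt; congr 1; ext j; simp [not_lt, and_comm]
  have e3 : ((univ : Finset (Fin n)).filter fun j : Fin n => (j:ℕ) < i ∧ (u j:ℕ) < i).card
      = ((univ : Finset (Fin n)).filter fun j : Fin n => (u j:ℕ) < i ∧ (j:ℕ) < i).card := by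
    congr 1; ext j; simp [and_comm]
  omega

lemma inter_card (v w : Perm (Fin n)) (i : ℕ) :
    (prefSet v i ∩ prefSet w i).card = Ccnt (v⁻¹ * w) i := by
  have hmem : ∀ (z : Perm (Fin n)) (x : Fin n), x ∈ prefSet z i ↔ ((z.symm x : Fin n) : ℕ) < i := by
    intro z x
    simp only [prefSet, Finset.mem_image, Finset.mem_filter, Finset.mem_univ, true_and]
    constructor
    · rintro ⟨j, hj, rfl⟩; simpa using hj
    · intro hx; exact ⟨z.symm x, hx, z.apply_symm_apply x⟩
  have key : prefSet v i ∩ prefSet w i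
      = ((univ : Finset (Fin n)).filter fun j : Fin n => (j:ℕ) < i ∧ (((v⁻¹ * w) j : Fin n) : ℕ) < i).map w.toEmbedding := by
    ext x
    simp only [Finset.mem_map, Finset.mem_filter_univ]
    simp only [Finset.mem_inter, hmem, Finset.mem_map, Finset.mem_filter, Finset.mem_univ,
      true_and, Equiv.coe_toEmbedding, Perm.mul_apply]
    constructor
    · rintro ⟨hv, hw⟩
      refine ⟨w.symm x, ⟨hw, ?_⟩, w.apply_symm_apply x⟩
      simpa [w.apply_symm_apply] using hv
    · rintro ⟨j, ⟨hj, hvj⟩, rfl⟩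
      refine ⟨?_, by simpa using hj⟩
      simpa using hvj
  rw [key, Finset.card_map]; rfl


lemma contains321_intro (u : Perm (Fin n)) {p q r : Fin n}
    (hpq : p < q) (hqr : q < r) (h1 : u q < u p) (h2 : u r < u q) :
    ContainsPat u pat321 := by
  refine ⟨![p, q, r], ?_, ?_⟩
  · intro i j hij
    fin_cases i <;> fin_cases j <;>
      simp_all [pat321, Matrix.cons_val_zero, Matrix.cons_val_one] <;> omega
  · intro i j
    fin_cases i <;> fin_cases j <;>
      simp_all [pat321, Matrix.cons_val_zero, Matrix.cons_val_one] <;>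
      first
        | exact le_of_lt h1
        | exact le_of_lt h2
        | exact le_of_lt (lt_trans h2 h1)
        | exact lt_trans h2 h1

lemma contains3412_intro (u : Perm (Fin n)) {p1 p2 p3 p4 : Fin n}
    (h12 : p1 < p2) (h23 : p2 < p3) (h34 : p3 < p4)
    (hv34 : u p3 < u p4) (hv41 : u p4 < u p1) (hv12 : u p1 < u p2) :
    ContainsPat u pat3412 := by
  have t1 : u p3 < u p1 := lt_trans hv34 hv41
  have t2 : u p4 < u p2 := lt_trans hv41 hv12
  have t3 : u p3 < u p2 := lt_trans t1 hv12
  refine ⟨![p1, p2, p3, p4], ?_, ?_⟩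
  · intro i j hij
    fin_cases i <;> fin_cases j <;> simp_all [pat3412] <;>
      first
        | exact h12 | exact h23 | exact h34
        | exact lt_trans h12 h23 | exact lt_trans h23 h34
        | exact lt_trans (lt_trans h12 h23) h34
  · intro i j
    fin_cases i <;> fin_cases j <;>
      simp only [pat3412, List.length_cons, Fin.zero_eta, Fin.mk_one, List.get_eq_getElem,
        Fin.isValue] <;>
      simp (config := {decide := true}) only [Matrix.cons_val', Matrix.cons_val_zero,
        Matrix.cons_val_one, Matrix.head_cons, Matrix.cons_val_two, Matrix.tail_cons,
        Matrix.cons_val_three, List.getElem_cons_zero, List.getElem_cons_succ,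
        iff_true, iff_false, not_lt, lt_irrefl, true_iff, false_iff] <;>
      first
        | rfl
        | exact hv34 | exact hv41 | exact hv12 | exact t1 | exact t2 | exact t3
        | exact le_of_lt hv34 | exact le_of_lt hv41 | exact le_of_lt hv12
        | exact le_of_lt t1 | exact le_of_lt t2 | exact le_of_lt t3
        | simp_all

lemma contains321_elim (u : Perm (Fin n)) (h : ContainsPat u pat321) :
    ∃ p q r : Fin n, p < q ∧ q < r ∧ u q < u p ∧ u r < u q := by
  obtain ⟨f, hf, hiff⟩ := h
  refine ⟨f ⟨0, by norm_num [pat321]⟩, f ⟨1, by norm_num [pat321]⟩, f ⟨2, by norm_num [pat321]⟩,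
    hf (by decide), hf (by decide), ?_, ?_⟩
  · exact (hiff ⟨1, by norm_num [pat321]⟩ ⟨0, by norm_num [pat321]⟩).mp (by norm_num [pat321])
  · exact (hiff ⟨2, by norm_num [pat321]⟩ ⟨1, by norm_num [pat321]⟩).mp (by norm_num [pat321])

lemma contains3412_elim (u : Perm (Fin n)) (h : ContainsPat u pat3412) :
    ∃ p1 p2 p3 p4 : Fin n, p1 < p2 ∧ p2 < p3 ∧ p3 < p4 ∧
      u p3 < u p4 ∧ u p4 < u p1 ∧ u p1 < u p2 := by
  obtain ⟨f, hf, hiff⟩ := h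
  refine ⟨f ⟨0, by norm_num [pat3412]⟩, f ⟨1, by norm_num [pat3412]⟩,
    f ⟨2, by norm_num [pat3412]⟩, f ⟨3, by norm_num [pat3412]⟩,
    hf (by decide), hf (by decide), hf (by decide), ?_, ?_, ?_⟩
  · exact (hiff ⟨2, by norm_num [pat3412]⟩ ⟨3, by norm_num [pat3412]⟩).mp (by norm_num [pat3412])
  · exact (hiff ⟨3, by norm_num [pat3412]⟩ ⟨0, by norm_num [pat3412]⟩).mp (by norm_num [pat3412])
  · exact (hiff ⟨0, by norm_num [pat3412]⟩ ⟨1, by norm_num [pat3412]⟩).mp (by norm_num [pat3412])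

lemma exists_two (s : Finset (Fin n)) (h : 2 ≤ s.card) : ∃ a b, a ∈ s ∧ b ∈ s ∧ a < b := by
  obtain ⟨a, ha, b, hb, hab⟩ := Finset.one_lt_card.mp h
  rcases hab.lt_or_gt with h' | h'
  exacts [⟨a, b, ha, hb, h'⟩, ⟨b, a, hb, ha, h'⟩]

lemma two_le_card {s : Finset (Fin n)} {a b : Fin n} (ha : a ∈ s) (hb : b ∈ s) (hab : a ≠ b) :
    2 ≤ s.card := Finset.one_lt_card.mpr ⟨a, ha, b, hb, hab⟩

theorem core_iff (u : Perm (Fin n)) :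
    (∃ i : ℕ, 1 ≤ i ∧ i ≤ n ∧ (2 ≤ Acnt u i ∨
        ((∃ h : i - 1 < n, u ⟨i - 1, h⟩ = ⟨i - 1, h⟩) ∧ 1 ≤ Acnt u i))) ↔
      (ContainsPat u pat321 ∨ ContainsPat u pat3412) := by
  constructor
  · rintro ⟨i, hi1, hin, hcase⟩
    rcases hcase with h2 | ⟨⟨hm, hfix⟩, h1⟩
    · -- 2 ≤ Acnt, also 2 ≤ Bcnt
      obtain ⟨p1, p2, hp1, hp2, hplt⟩ := exists_two _ h2
      obtain ⟨q1, q2, hq1, hq2, hqlt⟩ := exists_two _ (AB_eq u i ▸ h2)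
      simp only [mem_filter, mem_univ, true_and] at hp1 hp2 hq1 hq2
      have hp2q1 : p2 < q1 := by
        rw [Fin.lt_def]; omega
      rcases lt_trichotomy (u p1) (u p2) with hv | hv | hv
      · rcases lt_trichotomy (u q1) (u q2) with hw | hw | hw
        · -- 3412 with p1 p2 q1 q2
          refine Or.inr (contains3412_intro u hplt hp2q1 hqlt hw ?_ hv)
          rw [Fin.lt_def]; omega
        · exact absurd (u.injective hw) (ne_of_lt hqlt)
        · -- 321 with p1 q1 q2
          refine Or.inl (contains321_intro u (lt_trans hplt hp2q1) hqlt ?_ hw)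
          rw [Fin.lt_def]; omega
      · exact absurd (u.injective hv) (ne_of_lt hplt)
      · -- 321 with p1 p2 q1
        refine Or.inl (contains321_intro u hplt hp2q1 hv ?_)
        rw [Fin.lt_def]; omega
    · -- fixed point case
      set m : Fin n := ⟨i - 1, hm⟩ with hm_def
      have hum : (u m : ℕ) = i - 1 := by rw [hfix]
      have hB : 1 ≤ Bcnt u i := AB_eq u i ▸ h1
      obtain ⟨p, hp⟩ := Finset.card_pos.mp h1
      obtain ⟨q, hq⟩ := Finset.card_pos.mp hB
      simp only [mem_filter, mem_univ, true_and] at hp hq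
      have hpm : p < m := by
        rw [Fin.lt_def]
        have : p ≠ m := by
          intro h; rw [h] at hp; omega
        have : (p : ℕ) ≠ i - 1 := fun h => this (Fin.ext h)
        omega
      have hmq : m < q := by rw [Fin.lt_def]; simp only [hm_def]; omega
      have huq : (u q : ℕ) ≠ i - 1 := by
        intro h
        have : u q = u m := by rw [hfix]; exact Fin.ext h
        exact absurd (u.injective this) (ne_of_gt hmq)
      refine Or.inl (contains321_intro u hpm hmq ?_ ?_)
      · rw [Fin.lt_def]; omega
      · rw [Fin.lt_def]; omega
  · rintro (h | h)
    · obtain ⟨p, q, r, hpq, hqr, h1, h2⟩ := contains321_elim u h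
      rw [Fin.lt_def] at hpq hqr h1 h2
      rcases lt_trichotomy ((u q : ℕ)) ((q : ℕ)) with hc | hc | hc
      · -- i = u q + 1, Bcnt ≥ 2 via q, r
        refine ⟨(u q : ℕ) + 1, le_add_self, (u q).isLt, Or.inl ?_⟩
        rw [AB_eq]
        refine two_le_card (s := (univ : Finset (Fin n)).filter
            fun j : Fin n => (u q : ℕ) + 1 ≤ (j:ℕ) ∧ (u j : ℕ) < (u q : ℕ) + 1)
          (a := q) (b := r) ?_ ?_ ?_
        · simp only [mem_filter, mem_univ, true_and]; omega
        · simp only [mem_filter, mem_univ, true_and]; omega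
        · intro h; rw [h] at hqr; omega
      · -- fixed point at q
        refine ⟨(q : ℕ) + 1, le_add_self, q.isLt, Or.inr ⟨⟨by simpa using q.isLt, ?_⟩, ?_⟩⟩
        · have : (⟨(q:ℕ) + 1 - 1, by simpa using q.isLt⟩ : Fin n) = q := Fin.ext (by simp)
          rw [this]; exact Fin.ext hc
        · refine Finset.card_pos.mpr ⟨p, ?_⟩
          simp only [mem_filter, mem_univ, true_and]; omega
      · -- i = q + 1, Acnt ≥ 2 via p, q
        refine ⟨(q : ℕ) + 1, le_add_self, q.isLt, Or.inl ?_⟩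
        refine two_le_card (s := (univ : Finset (Fin n)).filter
            fun j : Fin n => (j:ℕ) < (q:ℕ) + 1 ∧ (q:ℕ) + 1 ≤ (u j : ℕ))
          (a := p) (b := q) ?_ ?_ ?_
        · simp only [mem_filter, mem_univ, true_and]; omega
        · simp only [mem_filter, mem_univ, true_and]; omega
        · intro h; rw [h] at hpq; omega
    · obtain ⟨p1, p2, p3, p4, h12, h23, h34, hv34, hv41, hv12⟩ := contains3412_elim u h
      rw [Fin.lt_def] at h12 h23 h34 hv34 hv41 hv12
      rcases lt_or_ge ((p2 : ℕ)) ((u p1 : ℕ)) with hc | hc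
      · refine ⟨(p2 : ℕ) + 1, le_add_self, p2.isLt, Or.inl ?_⟩
        refine two_le_card (s := (univ : Finset (Fin n)).filter
            fun j : Fin n => (j:ℕ) < (p2:ℕ) + 1 ∧ (p2:ℕ) + 1 ≤ (u j : ℕ))
          (a := p1) (b := p2) ?_ ?_ ?_
        · simp only [mem_filter, mem_univ, true_and]; omega
        · simp only [mem_filter, mem_univ, true_and]; omega
        · intro h; rw [h] at h12; omega
      · refine ⟨(u p4 : ℕ) + 1, le_add_self, (u p4).isLt, Or.inl ?_⟩
        rw [AB_eq]
        refine two_le_card (s := (univ : Finset (Fin n)).filter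
            fun j : Fin n => (u p4 : ℕ) + 1 ≤ (j:ℕ) ∧ (u j : ℕ) < (u p4 : ℕ) + 1)
          (a := p3) (b := p4) ?_ ?_ ?_
        · simp only [mem_filter, mem_univ, true_and]; omega
        · simp only [mem_filter, mem_univ, true_and]; omega
        · intro h; rw [h] at h34; omega

end AuxStmt5

theorem divisibleAfter_iff (v w : Perm (Fin n)) {i : ℕ} (hin : i ≤ n) :
    DivisibleAfter v w i ↔ 2 ≤ Acnt (v⁻¹ * w) i := by
  unfold DivisibleAfter
  rw [inter_card v w i]
  have := CA_split (v⁻¹ * w) hin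
  omega

theorem divisibleAt_iff (v w : Perm (Fin n)) {i : ℕ} (hin : i ≤ n) :
    DivisibleAt v w i ↔
      (∃ h : i - 1 < n, (v⁻¹ * w) ⟨i - 1, h⟩ = ⟨i - 1, h⟩) ∧ 1 ≤ Acnt (v⁻¹ * w) i := by
  unfold DivisibleAt
  have hC := inter_card v w i
  have hS := CA_split (v⁻¹ * w) hin
  constructor
  · rintro ⟨h, hvw, hcard⟩
    refine ⟨⟨h, ?_⟩, by omega⟩
    show v⁻¹ (w _) = _
    rw [← hvw]; exact v.symm_apply_apply _
  · rintro ⟨⟨h, hu⟩, hA⟩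
    refine ⟨h, ?_, by omega⟩
    have : v ((v⁻¹ * w) ⟨i - 1, h⟩) = v ⟨i - 1, h⟩ := congrArg v hu
    rw [Perm.mul_apply, Perm.inv_def, v.apply_symm_apply] at this
    exact this.symm

theorem stmt5 (n : ℕ) (v w : Perm (Fin n)) :
    Divisible v w ↔
      (ContainsPat (v⁻¹ * w) pat321 ∨ ContainsPat (v⁻¹ * w) pat3412) := by
  rw [← core_iff (v⁻¹ * w)]
  unfold Divisible
  constructor
  · rintro ⟨i, h1, h2, hd⟩
    refine ⟨i, h1, h2, ?_⟩
    rcases hd with hd | hd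
    · exact Or.inl ((divisibleAfter_iff v w h2).mp hd)
    · exact Or.inr ((divisibleAt_iff v w h2).mp hd)
  · rintro ⟨i, h1, h2, hd⟩
    refine ⟨i, h1, h2, ?_⟩
    rcases hd with hd | hd
    · exact Or.inl ((divisibleAfter_iff v w h2).mpr hd)
    · exact Or.inr ((divisibleAt_iff v w h2).mpr hd)
end

section
/- Let w ∈ S_n and v = w_0(J(w)) be the longest element of the parabolic subgroup generated by the left descents of w. Then for 1 ≤ a < b ≤ n: v⁻¹(b) < v⁻¹(a) if and only if w⁻¹(b) < w⁻¹(b-1) < ... < w⁻¹(a). -/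
open Equiv

/-- descent at (0-based) value position `k` -/
def Dsc {n : ℕ} (w : Perm (Fin n)) (k : ℕ) : Prop :=
  ∃ h : k + 1 < n, w⁻¹ ⟨k + 1, h⟩ < w⁻¹ ⟨k, Nat.lt_of_succ_lt h⟩

def SB {n : ℕ} (w : Perm (Fin n)) (x y : Fin n) : Prop :=
  ∀ k : ℕ, min (x : ℕ) (y : ℕ) ≤ k → k < max (x : ℕ) (y : ℕ) → Dsc w k

lemma sb_trans {n : ℕ} {w : Perm (Fin n)} {x y z : Fin n} (h1 : SB w x y) (h2 : SB w y z) :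
    SB w x z := by
  intro k hk1 hk2
  by_cases hc : min (x : ℕ) (y : ℕ) ≤ k ∧ k < max (x : ℕ) (y : ℕ)
  · exact h1 k hc.1 hc.2
  · exact h2 k (by omega) (by omega)

lemma sb_symm {n : ℕ} {w : Perm (Fin n)} {x y : Fin n} (h : SB w x y) : SB w y x :=
  fun k hk1 hk2 => h k (by omega) (by omega)

lemma sb_closure {n : ℕ} {w : Perm (Fin n)} {u : Perm (Fin n)}
    (hu : u ∈ Subgroup.closure (descentGens w)) : ∀ x, SB w x (u x) := by
  induction hu using Subgroup.closure_induction with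
  | mem g hg =>
      obtain ⟨i, j, hij, rfl, hd⟩ := hg
      intro x k hk1 hk2
      have hjn : (j : ℕ) < n := j.isLt
      have hdi : Dsc w (i : ℕ) := by
        refine ⟨by omega, ?_⟩
        have e1 : (⟨(i : ℕ) + 1, by omega⟩ : Fin n) = j := Fin.ext hij
        have e2 : (⟨(i : ℕ), by omega⟩ : Fin n) = i := Fin.ext rfl
        rw [e1, e2]
        exact hd
      rcases eq_or_ne x i with rfl | hxi
      · rw [Equiv.swap_apply_left] at hk1 hk2
        have : k = (x : ℕ) := by omega
        subst this; exact hdi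
      · rcases eq_or_ne x j with rfl | hxj
        · rw [Equiv.swap_apply_right] at hk1 hk2
          have : k = (i : ℕ) := by omega
          subst this; exact hdi
        · rw [Equiv.swap_apply_of_ne_of_ne hxi hxj] at hk1 hk2
          omega
  | one => intro x; simp only [Equiv.Perm.one_apply]; intro k h1 h2; omega
  | mul g g' _ _ hg hg' =>
      intro x
      exact sb_trans (hg' x) (hg (g' x))
  | inv g _ hg =>
      intro x
      have := hg (g⁻¹ x)
      rw [Equiv.Perm.inv_def, Equiv.apply_symm_apply] at this
      exact sb_symm this

lemma len_succ {n k : ℕ} (h : k + 1 < n) (v : Perm (Fin n))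
    (hlt : v⁻¹ ⟨k, Nat.lt_of_succ_lt h⟩ < v⁻¹ ⟨k + 1, h⟩) :
    len (Equiv.swap (⟨k, Nat.lt_of_succ_lt h⟩ : Fin n) ⟨k + 1, h⟩ * v) = len v + 1 := by
  set i : Fin n := ⟨k, Nat.lt_of_succ_lt h⟩ with hi
  set j : Fin n := ⟨k + 1, h⟩ with hj
  set s := Equiv.swap i j with hsdef
  have hs : ∀ a : Fin n, ((s a : ℕ)) =
      if (a : ℕ) = k then k + 1 else if (a : ℕ) = k + 1 then k else a := by
    intro a
    rcases eq_or_ne a i with rfl | hai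
    · simp [hsdef, Equiv.swap_apply_left, hi, hj]
    · rcases eq_or_ne a j with rfl | haj
      · have hval : (s j : ℕ) = k := by rw [hsdef, Equiv.swap_apply_right]
        rw [hval, hj]
        simp
      · have h1 : (a : ℕ) ≠ k := fun hh => hai (Fin.ext hh)
        have h2 : (a : ℕ) ≠ k + 1 := fun hh => haj (Fin.ext hh)
        rw [hsdef, Equiv.swap_apply_of_ne_of_ne hai haj]
        simp [h1, h2]
  have hset : (Finset.univ.filter fun q : Fin n × Fin n => q.1 < q.2 ∧ (s * v) q.2 < (s * v) q.1)
      = insert (v⁻¹ i, v⁻¹ j)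
          (Finset.univ.filter fun q : Fin n × Fin n => q.1 < q.2 ∧ v q.2 < v q.1) := by
    ext q
    rw [Finset.mem_insert, Finset.mem_filter, Finset.mem_filter]
    simp only [Finset.mem_univ, true_and,
      Equiv.Perm.mul_apply, Prod.ext_iff]
    have e1 : q.1 = v⁻¹ i ↔ (v q.1 : ℕ) = k := by
      rw [Equiv.Perm.inv_def, Equiv.eq_symm_apply]; exact Fin.ext_iff
    have e2 : q.2 = v⁻¹ j ↔ (v q.2 : ℕ) = k + 1 := by
      rw [Equiv.Perm.inv_def, Equiv.eq_symm_apply]; exact Fin.ext_iff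
    have e1' : q.1 = v⁻¹ j ↔ (v q.1 : ℕ) = k + 1 := by
      rw [Equiv.Perm.inv_def, Equiv.eq_symm_apply]; exact Fin.ext_iff
    have e2' : q.2 = v⁻¹ i ↔ (v q.2 : ℕ) = k := by
      rw [Equiv.Perm.inv_def, Equiv.eq_symm_apply]; exact Fin.ext_iff
    have hinj : (v q.1 : ℕ) = (v q.2 : ℕ) → (q.1 : ℕ) = (q.2 : ℕ) := fun hh =>
      congrArg Fin.val (v.injective (Fin.ext hh))
    have hltn : (v⁻¹ i : ℕ) < (v⁻¹ j : ℕ) := hlt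
    have f1 : (v q.1 : ℕ) = k → (q.1 : ℕ) = (v⁻¹ i : ℕ) := fun hh =>
      congrArg Fin.val (e1.mpr hh)
    have f2 : (v q.2 : ℕ) = k + 1 → (q.2 : ℕ) = (v⁻¹ j : ℕ) := fun hh =>
      congrArg Fin.val (e2.mpr hh)
    have f1' : (v q.1 : ℕ) = k + 1 → (q.1 : ℕ) = (v⁻¹ j : ℕ) := fun hh =>
      congrArg Fin.val (e1'.mpr hh)
    have f2' : (v q.2 : ℕ) = k → (q.2 : ℕ) = (v⁻¹ i : ℕ) := fun hh =>
      congrArg Fin.val (e2'.mpr hh)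
    rw [e1, e2, Fin.lt_def, Fin.lt_def, Fin.lt_def, hs (v q.1), hs (v q.2)]
    split_ifs <;> omega
  have hnot : (v⁻¹ i, v⁻¹ j) ∉
      (Finset.univ.filter fun q : Fin n × Fin n => q.1 < q.2 ∧ v q.2 < v q.1) := by
    simp only [Finset.mem_filter, Finset.mem_univ, true_and, not_and]
    intro _
    rw [Equiv.Perm.inv_def, Equiv.apply_symm_apply, Equiv.apply_symm_apply]
    rw [Fin.lt_def]
    simp [hi, hj]
  show (Finset.univ.filter fun q : Fin n × Fin n =>
      q.1 < q.2 ∧ (s * v) q.2 < (s * v) q.1).card = len v + 1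
  rw [hset, Finset.card_insert_of_notMem hnot]
  rfl

lemma v_descent {n : ℕ} {w v : Perm (Fin n)} (hv : IsW0J w v) {k : ℕ} (hd : Dsc w k)
    (h : k + 1 < n) : v⁻¹ ⟨k + 1, h⟩ < v⁻¹ ⟨k, Nat.lt_of_succ_lt h⟩ := by
  by_contra hc
  set i : Fin n := ⟨k, Nat.lt_of_succ_lt h⟩ with hi
  set j : Fin n := ⟨k + 1, h⟩ with hj
  have hij : i ≠ j := by
    simp only [hi, hj, ne_eq, Fin.mk.injEq]
    omega
  have hne : v⁻¹ i ≠ v⁻¹ j := fun hh => hij (v⁻¹.injective hh)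
  have hlt : v⁻¹ i < v⁻¹ j := lt_of_le_of_ne (not_lt.mp hc) hne
  have hwd : w⁻¹ j < w⁻¹ i := by
    obtain ⟨h', hlt'⟩ := hd
    exact hlt'
  have hsmem : Equiv.swap i j ∈ descentGens w := ⟨i, j, rfl, rfl, hwd⟩
  have humem : Equiv.swap i j * v ∈ Subgroup.closure (descentGens w) :=
    Subgroup.mul_mem _ (Subgroup.subset_closure hsmem) hv.1
  have hle := hv.2 _ humem
  have heq := len_succ h v hlt
  rw [heq] at hle
  omega

theorem stmt8 (n : ℕ) (w v : Perm (Fin n)) (hv : IsW0J w v)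
    (a b : Fin n) (hab : a < b) :
    v⁻¹ b < v⁻¹ a ↔
      ∀ k : ℕ, ∀ hk : (a : ℕ) ≤ k ∧ k < (b : ℕ),
        w⁻¹ ⟨k + 1, Nat.lt_of_le_of_lt (Nat.succ_le_of_lt hk.2) b.isLt⟩ <
          w⁻¹ ⟨k, Nat.lt_trans hk.2 b.isLt⟩ := by
  constructor
  · intro hvb k hk
    by_contra hno
    have hndsc : ¬ Dsc w k := by
      rintro ⟨h', hlt'⟩
      exact hno hlt'
    have hvinv : v⁻¹ ∈ Subgroup.closure (descentGens w) := Subgroup.inv_mem _ hv.1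
    have ha := sb_closure hvinv a
    have hb := sb_closure hvinv b
    have habn : (a : ℕ) < (b : ℕ) := hab
    have h1 : (v⁻¹ a : ℕ) ≤ k := by
      by_contra hc
      exact hndsc (ha k (by omega) (by omega))
    have h2 : k < (v⁻¹ b : ℕ) := by
      by_contra hc
      exact hndsc (hb k (by omega) (by omega))
    have hfin : (v⁻¹ b : ℕ) < (v⁻¹ a : ℕ) := hvb
    omega
  · intro H
    have key : ∀ m : ℕ, 1 ≤ m → ∀ hm : (a : ℕ) + m ≤ (b : ℕ),
        v⁻¹ ⟨(a : ℕ) + m, Nat.lt_of_le_of_lt hm b.isLt⟩ < v⁻¹ a := by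
      intro m
      induction m with
      | zero => intro h1; omega
      | succ m ih =>
          intro _ hm
          have hkn : (a : ℕ) + m + 1 < n := by
            have := b.isLt; omega
          have hd : Dsc w ((a : ℕ) + m) := by
            refine ⟨hkn, ?_⟩
            exact H ((a : ℕ) + m) ⟨by omega, by omega⟩
          have step := v_descent hv hd hkn
          rcases Nat.eq_zero_or_pos m with rfl | hm0
          · exact step
          · exact lt_trans step (ih hm0 (by omega))
    have habn : (a : ℕ) < (b : ℕ) := hab
    have hfin := key ((b : ℕ) - (a : ℕ)) (by omega) (by omega)
    have heq : (⟨(a : ℕ) + ((b : ℕ) - (a : ℕ)),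
        Nat.lt_of_le_of_lt (by omega) b.isLt⟩ : Fin n) = b := Fin.ext (by simp only [Fin.val_mk]; omega)
    rwa [heq] at hfin
end

section
/- For each of the eleven patterns p ∈ P^{321} = {24531, 25314, 25341, 42531, 45231, 45312, 52314, 52341, 53124, 53142, 53412}, the product w_0(J(p))·p contains the pattern 321. -/
open Equiv

set_option maxRecDepth 40000


/-! ### Auxiliary machinery -/

abbrev cutsOK (cs : List ℕ) (u : Perm (Fin 5)) : Prop :=
  ∀ c ∈ cs, ∀ k : Fin 5, (k : ℕ) ≤ c → (u k : ℕ) ≤ c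

def cutSubgroup (cs : List ℕ) : Subgroup (Perm (Fin 5)) where
  carrier := {u | cutsOK cs u}
  one_mem' := fun c _ k hk => hk
  mul_mem' := by
    intro a b ha hb c hc k hk
    exact ha c hc (b k) (hb c hc k hk)
  inv_mem' := by
    intro u hu c hc k hk
    classical
    set S : Finset (Fin 5) := Finset.univ.filter (fun k : Fin 5 => (k : ℕ) ≤ c) with hS
    have hsub : S.image u ⊆ S := by
      intro x hx
      rcases Finset.mem_image.mp hx with ⟨m, hm, rfl⟩
      simp only [hS, Finset.mem_filter, Finset.mem_univ, true_and] at hm ⊢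
      exact hu c hc m hm
    have hcard : S.card ≤ (S.image u).card := by
      rw [Finset.card_image_of_injective S u.injective]
    have heq : S.image u = S := Finset.eq_of_subset_of_card_le hsub hcard
    have hkS : k ∈ S := by
      simp only [hS, Finset.mem_filter, Finset.mem_univ, true_and]; exact hk
    rw [← heq] at hkS
    rcases Finset.mem_image.mp hkS with ⟨m, hm, hmk⟩
    have : u⁻¹ k = m := by rw [← hmk]; exact Equiv.symm_apply_apply u m
    rw [this]
    simpa only [hS, Finset.mem_filter, Finset.mem_univ, true_and] using hm

theorem mem_cutSubgroup {cs : List ℕ} {u : Perm (Fin 5)} :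
    u ∈ cutSubgroup cs ↔ cutsOK cs u := Iff.rfl

theorem w0j_eq (p v v0 : Perm (Fin 5)) (hv : IsW0J p v) (cs : List ℕ)
    (hgen : descentGens p ⊆ (cutSubgroup cs : Set (Perm (Fin 5))))
    (h0 : v0 ∈ Subgroup.closure (descentGens p))
    (huniq : ∀ u : Perm (Fin 5), cutsOK cs u → len v0 ≤ len u → u = v0) :
    v = v0 := by
  have h1 : v ∈ cutSubgroup cs :=
    (Subgroup.closure_le (cutSubgroup cs)).mpr hgen hv.1
  exact huniq v h1 (hv.2 v0 h0)

theorem oneLine_inj {p q : Perm (Fin 5)} (h : oneLine p = oneLine q) : p = q := by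
  unfold oneLine at h
  have h2 := List.ofFn_injective h
  apply Equiv.ext
  intro i
  have h3 : (p i : ℕ) + 1 = (q i : ℕ) + 1 := congrFun h2 i
  exact Fin.ext (Nat.succ_injective h3)

theorem sm3 (f : Fin 3 → Fin 5) (h : f 0 < f 1 ∧ f 1 < f 2) : StrictMono f := by
  intro a b hab
  fin_cases a <;> fin_cases b <;>
    first
      | exact absurd hab (by decide)
      | exact h.1
      | exact h.2
      | exact h.1.trans h.2

def mkP (f g : Fin 5 → Fin 5) (h1 : ∀ x, g (f x) = x) (h2 : ∀ x, f (g x) = x) :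
    Perm (Fin 5) := ⟨f, g, h1, h2⟩

def pA : Perm (Fin 5) := mkP ![1,3,4,2,0] ![4,0,3,1,2] (by decide) (by decide)
def vA : Perm (Fin 5) := mkP ![1,0,3,2,4] ![1,0,3,2,4] (by decide) (by decide)
theorem h0A : vA ∈ Subgroup.closure (descentGens pA) := by
  have hg0 : Equiv.swap (0:Fin 5) 1 ∈ descentGens pA := ⟨0, 1, by decide, rfl, by decide⟩
  have hg2 : Equiv.swap (2:Fin 5) 3 ∈ descentGens pA := ⟨2, 3, by decide, rfl, by decide⟩
  have e : vA = Equiv.swap (0:Fin 5) 1 * Equiv.swap (2:Fin 5) 3 := Equiv.ext (by decide)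
  rw [e]
  exact mul_mem (Subgroup.subset_closure hg0) (Subgroup.subset_closure hg2)

theorem hgenA : descentGens pA ⊆ (cutSubgroup [1, 3] : Set (Perm (Fin 5))) := by
  rintro u ⟨i, j, hij, rfl, hd⟩
  have key : ∀ i j : Fin 5, (i:ℕ)+1 = (j:ℕ) → pA⁻¹ j < pA⁻¹ i →
      cutsOK [1, 3] (Equiv.swap i j) := by decide
  exact key i j hij hd

theorem huniqA : ∀ u : Perm (Fin 5), cutsOK [1, 3] u → len vA ≤ len u → u = vA := by
  decide

def pB : Perm (Fin 5) := mkP ![1,4,2,0,3] ![3,0,2,4,1] (by decide) (by decide)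
def vB : Perm (Fin 5) := mkP ![1,0,2,4,3] ![1,0,2,4,3] (by decide) (by decide)
theorem h0B : vB ∈ Subgroup.closure (descentGens pB) := by
  have hg0 : Equiv.swap (0:Fin 5) 1 ∈ descentGens pB := ⟨0, 1, by decide, rfl, by decide⟩
  have hg3 : Equiv.swap (3:Fin 5) 4 ∈ descentGens pB := ⟨3, 4, by decide, rfl, by decide⟩
  have e : vB = Equiv.swap (0:Fin 5) 1 * Equiv.swap (3:Fin 5) 4 := Equiv.ext (by decide)
  rw [e]
  exact mul_mem (Subgroup.subset_closure hg0) (Subgroup.subset_closure hg3)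

theorem hgenB : descentGens pB ⊆ (cutSubgroup [1, 2] : Set (Perm (Fin 5))) := by
  rintro u ⟨i, j, hij, rfl, hd⟩
  have key : ∀ i j : Fin 5, (i:ℕ)+1 = (j:ℕ) → pB⁻¹ j < pB⁻¹ i →
      cutsOK [1, 2] (Equiv.swap i j) := by decide
  exact key i j hij hd

theorem huniqB : ∀ u : Perm (Fin 5), cutsOK [1, 2] u → len vB ≤ len u → u = vB := by
  decide

def pC : Perm (Fin 5) := mkP ![1,4,2,3,0] ![4,0,2,3,1] (by decide) (by decide)
def vC : Perm (Fin 5) := mkP ![1,0,2,4,3] ![1,0,2,4,3] (by decide) (by decide)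
theorem h0C : vC ∈ Subgroup.closure (descentGens pC) := by
  have hg0 : Equiv.swap (0:Fin 5) 1 ∈ descentGens pC := ⟨0, 1, by decide, rfl, by decide⟩
  have hg3 : Equiv.swap (3:Fin 5) 4 ∈ descentGens pC := ⟨3, 4, by decide, rfl, by decide⟩
  have e : vC = Equiv.swap (0:Fin 5) 1 * Equiv.swap (3:Fin 5) 4 := Equiv.ext (by decide)
  rw [e]
  exact mul_mem (Subgroup.subset_closure hg0) (Subgroup.subset_closure hg3)

theorem hgenC : descentGens pC ⊆ (cutSubgroup [1, 2] : Set (Perm (Fin 5))) := by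
  rintro u ⟨i, j, hij, rfl, hd⟩
  have key : ∀ i j : Fin 5, (i:ℕ)+1 = (j:ℕ) → pC⁻¹ j < pC⁻¹ i →
      cutsOK [1, 2] (Equiv.swap i j) := by decide
  exact key i j hij hd

theorem huniqC : ∀ u : Perm (Fin 5), cutsOK [1, 2] u → len vC ≤ len u → u = vC := by
  decide

def pD : Perm (Fin 5) := mkP ![3,1,4,2,0] ![4,1,3,0,2] (by decide) (by decide)
def vD : Perm (Fin 5) := mkP ![1,0,3,2,4] ![1,0,3,2,4] (by decide) (by decide)
theorem h0D : vD ∈ Subgroup.closure (descentGens pD) := by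
  have hg0 : Equiv.swap (0:Fin 5) 1 ∈ descentGens pD := ⟨0, 1, by decide, rfl, by decide⟩
  have hg2 : Equiv.swap (2:Fin 5) 3 ∈ descentGens pD := ⟨2, 3, by decide, rfl, by decide⟩
  have e : vD = Equiv.swap (0:Fin 5) 1 * Equiv.swap (2:Fin 5) 3 := Equiv.ext (by decide)
  rw [e]
  exact mul_mem (Subgroup.subset_closure hg0) (Subgroup.subset_closure hg2)

theorem hgenD : descentGens pD ⊆ (cutSubgroup [1, 3] : Set (Perm (Fin 5))) := by
  rintro u ⟨i, j, hij, rfl, hd⟩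
  have key : ∀ i j : Fin 5, (i:ℕ)+1 = (j:ℕ) → pD⁻¹ j < pD⁻¹ i →
      cutsOK [1, 3] (Equiv.swap i j) := by decide
  exact key i j hij hd

theorem huniqD : ∀ u : Perm (Fin 5), cutsOK [1, 3] u → len vD ≤ len u → u = vD := by
  decide

def pE : Perm (Fin 5) := mkP ![3,4,1,2,0] ![4,2,3,0,1] (by decide) (by decide)
def vE : Perm (Fin 5) := mkP ![1,0,3,2,4] ![1,0,3,2,4] (by decide) (by decide)
theorem h0E : vE ∈ Subgroup.closure (descentGens pE) := by
  have hg0 : Equiv.swap (0:Fin 5) 1 ∈ descentGens pE := ⟨0, 1, by decide, rfl, by decide⟩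
  have hg2 : Equiv.swap (2:Fin 5) 3 ∈ descentGens pE := ⟨2, 3, by decide, rfl, by decide⟩
  have e : vE = Equiv.swap (0:Fin 5) 1 * Equiv.swap (2:Fin 5) 3 := Equiv.ext (by decide)
  rw [e]
  exact mul_mem (Subgroup.subset_closure hg0) (Subgroup.subset_closure hg2)

theorem hgenE : descentGens pE ⊆ (cutSubgroup [1, 3] : Set (Perm (Fin 5))) := by
  rintro u ⟨i, j, hij, rfl, hd⟩
  have key : ∀ i j : Fin 5, (i:ℕ)+1 = (j:ℕ) → pE⁻¹ j < pE⁻¹ i →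
      cutsOK [1, 3] (Equiv.swap i j) := by decide
  exact key i j hij hd

theorem huniqE : ∀ u : Perm (Fin 5), cutsOK [1, 3] u → len vE ≤ len u → u = vE := by
  decide

def pF : Perm (Fin 5) := mkP ![3,4,2,0,1] ![3,4,2,0,1] (by decide) (by decide)
def vF : Perm (Fin 5) := mkP ![0,3,2,1,4] ![0,3,2,1,4] (by decide) (by decide)
theorem h0F : vF ∈ Subgroup.closure (descentGens pF) := by
  have hg1 : Equiv.swap (1:Fin 5) 2 ∈ descentGens pF := ⟨1, 2, by decide, rfl, by decide⟩
  have hg2 : Equiv.swap (2:Fin 5) 3 ∈ descentGens pF := ⟨2, 3, by decide, rfl, by decide⟩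
  have e : vF = Equiv.swap (1:Fin 5) 2 * Equiv.swap (2:Fin 5) 3 * Equiv.swap (1:Fin 5) 2 := Equiv.ext (by decide)
  rw [e]
  exact mul_mem (mul_mem (Subgroup.subset_closure hg1) (Subgroup.subset_closure hg2)) (Subgroup.subset_closure hg1)

theorem hgenF : descentGens pF ⊆ (cutSubgroup [0, 3] : Set (Perm (Fin 5))) := by
  rintro u ⟨i, j, hij, rfl, hd⟩
  have key : ∀ i j : Fin 5, (i:ℕ)+1 = (j:ℕ) → pF⁻¹ j < pF⁻¹ i →
      cutsOK [0, 3] (Equiv.swap i j) := by decide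
  exact key i j hij hd

theorem huniqF : ∀ u : Perm (Fin 5), cutsOK [0, 3] u → len vF ≤ len u → u = vF := by
  decide

def pG : Perm (Fin 5) := mkP ![4,1,2,0,3] ![3,1,2,4,0] (by decide) (by decide)
def vG : Perm (Fin 5) := mkP ![1,0,2,4,3] ![1,0,2,4,3] (by decide) (by decide)
theorem h0G : vG ∈ Subgroup.closure (descentGens pG) := by
  have hg0 : Equiv.swap (0:Fin 5) 1 ∈ descentGens pG := ⟨0, 1, by decide, rfl, by decide⟩
  have hg3 : Equiv.swap (3:Fin 5) 4 ∈ descentGens pG := ⟨3, 4, by decide, rfl, by decide⟩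
  have e : vG = Equiv.swap (0:Fin 5) 1 * Equiv.swap (3:Fin 5) 4 := Equiv.ext (by decide)
  rw [e]
  exact mul_mem (Subgroup.subset_closure hg0) (Subgroup.subset_closure hg3)

theorem hgenG : descentGens pG ⊆ (cutSubgroup [1, 2] : Set (Perm (Fin 5))) := by
  rintro u ⟨i, j, hij, rfl, hd⟩
  have key : ∀ i j : Fin 5, (i:ℕ)+1 = (j:ℕ) → pG⁻¹ j < pG⁻¹ i →
      cutsOK [1, 2] (Equiv.swap i j) := by decide
  exact key i j hij hd

theorem huniqG : ∀ u : Perm (Fin 5), cutsOK [1, 2] u → len vG ≤ len u → u = vG := by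
  decide

def pH : Perm (Fin 5) := mkP ![4,1,2,3,0] ![4,1,2,3,0] (by decide) (by decide)
def vH : Perm (Fin 5) := mkP ![1,0,2,4,3] ![1,0,2,4,3] (by decide) (by decide)
theorem h0H : vH ∈ Subgroup.closure (descentGens pH) := by
  have hg0 : Equiv.swap (0:Fin 5) 1 ∈ descentGens pH := ⟨0, 1, by decide, rfl, by decide⟩
  have hg3 : Equiv.swap (3:Fin 5) 4 ∈ descentGens pH := ⟨3, 4, by decide, rfl, by decide⟩
  have e : vH = Equiv.swap (0:Fin 5) 1 * Equiv.swap (3:Fin 5) 4 := Equiv.ext (by decide)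
  rw [e]
  exact mul_mem (Subgroup.subset_closure hg0) (Subgroup.subset_closure hg3)

theorem hgenH : descentGens pH ⊆ (cutSubgroup [1, 2] : Set (Perm (Fin 5))) := by
  rintro u ⟨i, j, hij, rfl, hd⟩
  have key : ∀ i j : Fin 5, (i:ℕ)+1 = (j:ℕ) → pH⁻¹ j < pH⁻¹ i →
      cutsOK [1, 2] (Equiv.swap i j) := by decide
  exact key i j hij hd

theorem huniqH : ∀ u : Perm (Fin 5), cutsOK [1, 2] u → len vH ≤ len u → u = vH := by
  decide

def pI : Perm (Fin 5) := mkP ![4,2,0,1,3] ![2,3,1,4,0] (by decide) (by decide)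
def vI : Perm (Fin 5) := mkP ![0,2,1,4,3] ![0,2,1,4,3] (by decide) (by decide)
theorem h0I : vI ∈ Subgroup.closure (descentGens pI) := by
  have hg1 : Equiv.swap (1:Fin 5) 2 ∈ descentGens pI := ⟨1, 2, by decide, rfl, by decide⟩
  have hg3 : Equiv.swap (3:Fin 5) 4 ∈ descentGens pI := ⟨3, 4, by decide, rfl, by decide⟩
  have e : vI = Equiv.swap (1:Fin 5) 2 * Equiv.swap (3:Fin 5) 4 := Equiv.ext (by decide)
  rw [e]
  exact mul_mem (Subgroup.subset_closure hg1) (Subgroup.subset_closure hg3)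

theorem hgenI : descentGens pI ⊆ (cutSubgroup [0, 2] : Set (Perm (Fin 5))) := by
  rintro u ⟨i, j, hij, rfl, hd⟩
  have key : ∀ i j : Fin 5, (i:ℕ)+1 = (j:ℕ) → pI⁻¹ j < pI⁻¹ i →
      cutsOK [0, 2] (Equiv.swap i j) := by decide
  exact key i j hij hd

theorem huniqI : ∀ u : Perm (Fin 5), cutsOK [0, 2] u → len vI ≤ len u → u = vI := by
  decide

def pJ : Perm (Fin 5) := mkP ![4,2,0,3,1] ![2,4,1,3,0] (by decide) (by decide)
def vJ : Perm (Fin 5) := mkP ![0,2,1,4,3] ![0,2,1,4,3] (by decide) (by decide)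
theorem h0J : vJ ∈ Subgroup.closure (descentGens pJ) := by
  have hg1 : Equiv.swap (1:Fin 5) 2 ∈ descentGens pJ := ⟨1, 2, by decide, rfl, by decide⟩
  have hg3 : Equiv.swap (3:Fin 5) 4 ∈ descentGens pJ := ⟨3, 4, by decide, rfl, by decide⟩
  have e : vJ = Equiv.swap (1:Fin 5) 2 * Equiv.swap (3:Fin 5) 4 := Equiv.ext (by decide)
  rw [e]
  exact mul_mem (Subgroup.subset_closure hg1) (Subgroup.subset_closure hg3)

theorem hgenJ : descentGens pJ ⊆ (cutSubgroup [0, 2] : Set (Perm (Fin 5))) := by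
  rintro u ⟨i, j, hij, rfl, hd⟩
  have key : ∀ i j : Fin 5, (i:ℕ)+1 = (j:ℕ) → pJ⁻¹ j < pJ⁻¹ i →
      cutsOK [0, 2] (Equiv.swap i j) := by decide
  exact key i j hij hd

theorem huniqJ : ∀ u : Perm (Fin 5), cutsOK [0, 2] u → len vJ ≤ len u → u = vJ := by
  decide

def pK : Perm (Fin 5) := mkP ![4,2,3,0,1] ![3,4,1,2,0] (by decide) (by decide)
def vK : Perm (Fin 5) := mkP ![0,2,1,4,3] ![0,2,1,4,3] (by decide) (by decide)
theorem h0K : vK ∈ Subgroup.closure (descentGens pK) := by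
  have hg1 : Equiv.swap (1:Fin 5) 2 ∈ descentGens pK := ⟨1, 2, by decide, rfl, by decide⟩
  have hg3 : Equiv.swap (3:Fin 5) 4 ∈ descentGens pK := ⟨3, 4, by decide, rfl, by decide⟩
  have e : vK = Equiv.swap (1:Fin 5) 2 * Equiv.swap (3:Fin 5) 4 := Equiv.ext (by decide)
  rw [e]
  exact mul_mem (Subgroup.subset_closure hg1) (Subgroup.subset_closure hg3)

theorem hgenK : descentGens pK ⊆ (cutSubgroup [0, 2] : Set (Perm (Fin 5))) := by
  rintro u ⟨i, j, hij, rfl, hd⟩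
  have key : ∀ i j : Fin 5, (i:ℕ)+1 = (j:ℕ) → pK⁻¹ j < pK⁻¹ i →
      cutsOK [0, 2] (Equiv.swap i j) := by decide
  exact key i j hij hd

theorem huniqK : ∀ u : Perm (Fin 5), cutsOK [0, 2] u → len vK ≤ len u → u = vK := by
  decide

theorem stmt11 (p : Perm (Fin 5)) (hp : oneLine p ∈ P321L)
    (v : Perm (Fin 5)) (hv : IsW0J p v) :
    ContainsPat (v * p) pat321 := by
  simp only [P321L, List.mem_cons, List.not_mem_nil, or_false] at hp
  rcases hp with h|h|h|h|h|h|h|h|h|h|h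
  · have hpe : p = pA := oneLine_inj (h.trans (by decide : oneLine pA = [2, 4, 5, 3, 1]).symm)
    subst hpe
    have hve : v = vA := w0j_eq _ v _ hv [1, 3] hgenA h0A huniqA
    subst hve
    exact ⟨![2,3,4], sm3 _ (by decide), by decide⟩
  · have hpe : p = pB := oneLine_inj (h.trans (by decide : oneLine pB = [2, 5, 3, 1, 4]).symm)
    subst hpe
    have hve : v = vB := w0j_eq _ v _ hv [1, 2] hgenB h0B huniqB
    subst hve
    exact ⟨![1,2,3], sm3 _ (by decide), by decide⟩
  · have hpe : p = pC := oneLine_inj (h.trans (by decide : oneLine pC = [2, 5, 3, 4, 1]).symm)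
    subst hpe
    have hve : v = vC := w0j_eq _ v _ hv [1, 2] hgenC h0C huniqC
    subst hve
    exact ⟨![1,2,4], sm3 _ (by decide), by decide⟩
  · have hpe : p = pD := oneLine_inj (h.trans (by decide : oneLine pD = [4, 2, 5, 3, 1]).symm)
    subst hpe
    have hve : v = vD := w0j_eq _ v _ hv [1, 3] hgenD h0D huniqD
    subst hve
    exact ⟨![2,3,4], sm3 _ (by decide), by decide⟩
  · have hpe : p = pE := oneLine_inj (h.trans (by decide : oneLine pE = [4, 5, 2, 3, 1]).symm)
    subst hpe
    have hve : v = vE := w0j_eq _ v _ hv [1, 3] hgenE h0E huniqE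
    subst hve
    exact ⟨![1,3,4], sm3 _ (by decide), by decide⟩
  · have hpe : p = pF := oneLine_inj (h.trans (by decide : oneLine pF = [4, 5, 3, 1, 2]).symm)
    subst hpe
    have hve : v = vF := w0j_eq _ v _ hv [0, 3] hgenF h0F huniqF
    subst hve
    exact ⟨![1,2,3], sm3 _ (by decide), by decide⟩
  · have hpe : p = pG := oneLine_inj (h.trans (by decide : oneLine pG = [5, 2, 3, 1, 4]).symm)
    subst hpe
    have hve : v = vG := w0j_eq _ v _ hv [1, 2] hgenG h0G huniqG
    subst hve
    exact ⟨![0,2,3], sm3 _ (by decide), by decide⟩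
  · have hpe : p = pH := oneLine_inj (h.trans (by decide : oneLine pH = [5, 2, 3, 4, 1]).symm)
    subst hpe
    have hve : v = vH := w0j_eq _ v _ hv [1, 2] hgenH h0H huniqH
    subst hve
    exact ⟨![0,2,4], sm3 _ (by decide), by decide⟩
  · have hpe : p = pI := oneLine_inj (h.trans (by decide : oneLine pI = [5, 3, 1, 2, 4]).symm)
    subst hpe
    have hve : v = vI := w0j_eq _ v _ hv [0, 2] hgenI h0I huniqI
    subst hve
    exact ⟨![0,1,2], sm3 _ (by decide), by decide⟩
  · have hpe : p = pJ := oneLine_inj (h.trans (by decide : oneLine pJ = [5, 3, 1, 4, 2]).symm)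
    subst hpe
    have hve : v = vJ := w0j_eq _ v _ hv [0, 2] hgenJ h0J huniqJ
    subst hve
    exact ⟨![0,1,2], sm3 _ (by decide), by decide⟩
  · have hpe : p = pK := oneLine_inj (h.trans (by decide : oneLine pK = [5, 3, 4, 1, 2]).symm)
    subst hpe
    have hve : v = vK := w0j_eq _ v _ hv [0, 2] hgenK h0K huniqK
    subst hve
    exact ⟨![0,1,3], sm3 _ (by decide), by decide⟩
end
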